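/- arXiv:2505.12243 — 11 statements merged into one kernel-verified Lean document; each statement's English description precedes it below -/
import Mathlib

section
/- For every integer r with 1 ≤ r ≤ n and every odd positive integer i, the truncated inclusion–exclusion sums bound P(X ≥ r): Σ_{j=r}^{r+i} (-1)^{r+j} C(j-1, r-1) S_j ≤ P(X ≥ r) ≤ Σ_{j=r}^{r+i+1} (-1)^{r+j} C(j-1, r-1) S_j, where S_j is taken to be 0 for j > n. -/
open MeasureTheory Finset
open scoped Classical

private lemma choose_split (y m : ℕ) (hy : m + 1 ≤ y) :
    ∀ k, m ≤ k →
      ∑ j ∈ Finset.Icc m k, (-1 : ℝ) ^ j * (j.choose m) * (y.choose j)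
        = (-1 : ℝ) ^ k * (y.choose m) * ((y - (m + 1)).choose (k - m)) := by
  intro k hk
  induction k, hk using Nat.le_induction with
  | base => simp
  | succ k hk ih =>
      rw [Finset.sum_Icc_succ_top (by omega), ih]
      have hpascal : (y - (m+1)).choose (k - m) + (y - (m+1)).choose (k + 1 - m)
          = (y - m).choose (k + 1 - m) := by
        have h1 : y - m = (y - (m+1)) + 1 := by omega
        have h2 : k + 1 - m = (k - m) + 1 := by omega
        rw [h1, h2, Nat.choose_succ_succ]
      have hkey : y.choose m * ((y - m).choose (k + 1 - m))
          = y.choose (k+1) * ((k+1).choose m) := by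
        rcases le_or_gt (k+1) y with h | h
        · rw [Nat.choose_mul (n := y) (k := k+1) (s := m) (by omega)]
        · rw [Nat.choose_eq_zero_of_lt (show y - m < k + 1 - m by omega),
            Nat.choose_eq_zero_of_lt h, mul_zero, zero_mul]
      have e1 : ((y - m).choose (k + 1 - m) : ℝ)
          = ((y - (m+1)).choose (k - m) : ℝ) + ((y - (m+1)).choose (k + 1 - m) : ℝ) := by
        rw [← hpascal]; push_cast; ring
      have e2 : (y.choose m : ℝ) * ((y - m).choose (k + 1 - m) : ℝ)
          = (y.choose (k+1) : ℝ) * (((k+1).choose m) : ℝ) := by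
        exact_mod_cast congrArg (Nat.cast : ℕ → ℝ) hkey
      linear_combination ((-1:ℝ)^k) * e2 - ((-1:ℝ)^k) * (y.choose m : ℝ) * e1

private lemma bonferroni_pointwise (r k : ℕ) (hr : 1 ≤ r) (hk : r ≤ k) (x : ℕ) :
    0 ≤ (-1 : ℝ) ^ (r + k + 1) *
      ((if r ≤ x then (1:ℝ) else 0) -
        ∑ j ∈ Finset.Icc r k, (-1 : ℝ) ^ (r + j) * ((j - 1).choose (r - 1)) * (x.choose j)) := by
  induction x with
  | zero =>
      rw [Finset.sum_eq_zero, if_neg (by omega)]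
      · simp
      · intro j hj
        rw [mem_Icc] at hj
        rw [Nat.choose_eq_zero_of_lt (show 0 < j by omega)]
        simp
  | succ x ih =>
      rcases lt_trichotomy (x+1) r with h | h | h
      · rw [Finset.sum_eq_zero, if_neg (by omega)]
        · simp
        · intro j hj
          rw [mem_Icc] at hj
          rw [Nat.choose_eq_zero_of_lt (show x + 1 < j by omega)]
          simp
      · have hsum : ∑ j ∈ Finset.Icc r k,
            (-1 : ℝ) ^ (r + j) * ((j - 1).choose (r - 1)) * ((x+1).choose j) = 1 := by
          rw [Finset.sum_eq_single_of_mem r (by rw [mem_Icc]; omega)]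
          · rw [← h]
            simp [← two_mul, pow_mul]
          · intro j hj hne
            rw [mem_Icc] at hj
            rw [Nat.choose_eq_zero_of_lt (show x + 1 < j by omega)]
            simp
        rw [hsum, if_pos (by omega)]
        simp
      · have hrx : r ≤ x := by omega
        have hre : Finset.Icc r k = Finset.image (· + 1) (Finset.Icc (r-1) (k-1)) := by
          ext a
          simp only [mem_image, mem_Icc]
          constructor
          · intro ha; exact ⟨a - 1, by omega, by omega⟩
          · rintro ⟨b, hb, rfl⟩; omega
        have hΔ : ∑ j ∈ Finset.Icc r k,
              (-1 : ℝ) ^ (r + j) * ((j - 1).choose (r - 1)) * ((x+1).choose j)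
            = (∑ j ∈ Finset.Icc r k,
              (-1 : ℝ) ^ (r + j) * ((j - 1).choose (r - 1)) * (x.choose j))
              + (-1 : ℝ) ^ (r + k) * (x.choose (r-1)) * ((x - r).choose (k - 1 - (r-1))) := by
          have step1 : ∀ j ∈ Finset.Icc r k,
              (-1 : ℝ) ^ (r + j) * ((j - 1).choose (r - 1)) * ((x+1).choose j)
              = (-1 : ℝ) ^ (r + j) * ((j - 1).choose (r - 1)) * (x.choose j)
                + (-1 : ℝ) ^ (r + j) * ((j - 1).choose (r - 1)) * (x.choose (j-1)) := by
            intro j hj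
            rw [mem_Icc] at hj
            have hj1 : j = (j - 1) + 1 := by omega
            have : (x+1).choose j = x.choose (j-1) + x.choose j := by
              conv_lhs => rw [hj1]
              rw [Nat.choose_succ_succ, Nat.succ_eq_add_one, ← hj1]
            rw [this]
            push_cast
            ring
          rw [Finset.sum_congr rfl step1, Finset.sum_add_distrib]
          congr 1
          have step2 : ∑ j ∈ Finset.Icc r k,
              (-1 : ℝ) ^ (r + j) * ((j - 1).choose (r - 1)) * (x.choose (j-1))
              = (-1:ℝ)^(r+1) * ∑ j ∈ Finset.Icc (r-1) (k-1),
                  (-1 : ℝ) ^ j * ((j).choose (r - 1)) * (x.choose j) := by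
            rw [hre, Finset.sum_image (by intro a _ b _ hab; simp only at hab; omega), Finset.mul_sum]
            refine Finset.sum_congr rfl ?_
            intro j hj
            rw [mem_Icc] at hj
            have : r + (j + 1) = (r + 1) + j := by ring
            rw [Nat.add_sub_cancel, this, pow_add]
            ring
          rw [step2, choose_split x (r-1) (by omega) (k-1) (by omega)]
          have hx : x - (r - 1 + 1) = x - r := by omega
          rw [hx]
          have hsign : (-1:ℝ)^(r+1) * (-1:ℝ)^(k-1) = (-1:ℝ)^(r+k) := by
            rw [← pow_add]
            have : (r + 1) + (k - 1) = r + k := by omega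
            rw [this]
          rw [← mul_assoc, ← mul_assoc, hsign]
        rw [hΔ, if_pos (by omega)]
        rw [if_pos hrx] at ih
        have hpow : (-1:ℝ)^(r+k+1) = -((-1:ℝ)^(r+k)) := by rw [pow_succ]; ring
        have hsq : ((-1:ℝ)^(r+k)) * ((-1:ℝ)^(r+k)) = 1 := by
          rw [← pow_add, ← two_mul, pow_mul]; norm_num
        have hab : (0:ℝ) ≤ (x.choose (r-1)) * ((x - r).choose (k - 1 - (r-1))) := by positivity
        rw [hpow] at ih ⊢
        nlinarith [ih, hab, hsq]

/-- classical Bonferroni inequalities.  For `1 ≤ r ≤ n` and odd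
positive `i`,
`∑_{j=r}^{r+i} (-1)^{r+j} C(j-1,r-1) S_j ≤ P(X ≥ r) ≤ ∑_{j=r}^{r+i+1} (-1)^{r+j} C(j-1,r-1) S_j`,
where `S_j = 0` for `j > n` (here automatic, since `powersetCard j univ = ∅` for `j > n`). -/
theorem bonferroni_inequalities
    {Ω : Type*} [MeasurableSpace Ω] (P : Measure Ω) [IsProbabilityMeasure P]
    (n : ℕ) (A : Fin n → Set Ω) (hA : ∀ i, MeasurableSet (A i))
    (r i : ℕ) (hr1 : 1 ≤ r) (hrn : r ≤ n) (hi : Odd i) :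
    (∑ j ∈ Finset.Icc r (r + i),
        (-1 : ℝ) ^ (r + j) * ((j - 1).choose (r - 1)) *
          ∑ T ∈ Finset.powersetCard j (Finset.univ : Finset (Fin n)),
            (P (⋂ l ∈ T, A l)).toReal)
      ≤ (P {ω | r ≤ (Finset.univ.filter (fun l => ω ∈ A l)).card}).toReal
    ∧ (P {ω | r ≤ (Finset.univ.filter (fun l => ω ∈ A l)).card}).toReal
      ≤ ∑ j ∈ Finset.Icc r (r + i + 1),
          (-1 : ℝ) ^ (r + j) * ((j - 1).choose (r - 1)) *
            ∑ T ∈ Finset.powersetCard j (Finset.univ : Finset (Fin n)),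
              (P (⋂ l ∈ T, A l)).toReal := by
  classical
  set B : Finset (Fin n) → Set Ω := fun s => {ω | (Finset.univ.filter fun l => ω ∈ A l) = s}
    with hBdef
  have hBmeas : ∀ s, MeasurableSet (B s) := by
    intro s
    have hBeq : B s = ⋂ l, (if l ∈ s then A l else (A l)ᶜ) := by
      ext ω
      simp only [hBdef, Set.mem_setOf_eq, Set.mem_iInter, Finset.ext_iff, Finset.mem_filter,
        Finset.mem_univ, true_and]
      constructor
      · intro hl l
        have := hl l
        split_ifs with hls
        · exact this.mpr hls
        · simp only [Set.mem_compl_iff]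
          intro hw
          exact hls (this.mp hw)
      · intro hl l
        have := hl l
        split_ifs at this with hls
        · exact ⟨fun _ => hls, fun _ => this⟩
        · simp only [Set.mem_compl_iff] at this
          exact ⟨fun hw => absurd hw this, fun hws => absurd hws hls⟩
    rw [hBeq]
    exact MeasurableSet.iInter fun l => by
      split_ifs
      · exact hA l
      · exact (hA l).compl
  have key : ∀ q : Finset (Fin n) → Prop,
      (P {ω | q (Finset.univ.filter fun l => ω ∈ A l)}).toReal
        = ∑ s ∈ (Finset.univ : Finset (Finset (Fin n))).filter q, (P (B s)).toReal := by
    intro q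
    have hset : {ω | q (Finset.univ.filter fun l => ω ∈ A l)}
        = ⋃ s ∈ (Finset.univ : Finset (Finset (Fin n))).filter q, B s := by
      ext ω
      simp only [Set.mem_setOf_eq, Set.mem_iUnion, Finset.mem_filter, Finset.mem_univ, true_and,
        hBdef, exists_prop]
      constructor
      · intro h
        exact ⟨_, h, rfl⟩
      · rintro ⟨s, hs, hmem⟩
        rw [hmem]
        exact hs
    have hdisj : (↑((Finset.univ : Finset (Finset (Fin n))).filter q) :
        Set (Finset (Fin n))).PairwiseDisjoint B := by
      intro s _ t _ hst
      rw [Function.onFun, Set.disjoint_left]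
      intro ω h1 h2
      exact hst (h1.symm.trans h2)
    rw [hset, measure_biUnion_finset hdisj (fun s _ => hBmeas s),
      ENNReal.toReal_sum (fun s _ => measure_ne_top P _)]
  have hS : ∀ j : ℕ,
      ∑ T ∈ Finset.powersetCard j (Finset.univ : Finset (Fin n)), (P (⋂ l ∈ T, A l)).toReal
        = ∑ s ∈ (Finset.univ : Finset (Finset (Fin n))),
            ((s.card.choose j : ℕ) : ℝ) * (P (B s)).toReal := by
    intro j
    have h1 : ∀ T : Finset (Fin n),
        (P (⋂ l ∈ T, A l)).toReal
          = ∑ s ∈ (Finset.univ : Finset (Finset (Fin n))).filter (fun s => T ⊆ s),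
              (P (B s)).toReal := by
      intro T
      have : (⋂ l ∈ T, A l) = {ω | T ⊆ Finset.univ.filter fun l => ω ∈ A l} := by
        ext ω
        simp only [Set.mem_iInter, Set.mem_setOf_eq, Finset.subset_iff, Finset.mem_filter,
          Finset.mem_univ, true_and]
      rw [this, key]
      refine Finset.sum_congr ?_ fun _ _ => rfl
      ext s
      simp [Finset.mem_filter]
    calc ∑ T ∈ Finset.powersetCard j (Finset.univ : Finset (Fin n)),
            (P (⋂ l ∈ T, A l)).toReal
        = ∑ T ∈ Finset.powersetCard j (Finset.univ : Finset (Fin n)),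
            ∑ s ∈ (Finset.univ : Finset (Finset (Fin n))),
              (if T ⊆ s then (P (B s)).toReal else 0) := by
          refine Finset.sum_congr rfl fun T _ => ?_
          rw [h1 T, Finset.sum_filter]
      _ = ∑ s ∈ (Finset.univ : Finset (Finset (Fin n))),
            ∑ T ∈ Finset.powersetCard j (Finset.univ : Finset (Fin n)),
              (if T ⊆ s then (P (B s)).toReal else 0) := Finset.sum_comm
      _ = ∑ s ∈ (Finset.univ : Finset (Finset (Fin n))),
            ((s.card.choose j : ℕ) : ℝ) * (P (B s)).toReal := by
          refine Finset.sum_congr rfl fun s _ => ?_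
          rw [← Finset.sum_filter]
          have hfil : (Finset.powersetCard j (Finset.univ : Finset (Fin n))).filter (· ⊆ s)
              = Finset.powersetCard j s := by
            ext T
            simp only [Finset.mem_filter, Finset.mem_powersetCard, Finset.subset_univ, true_and]
            tauto
          rw [hfil, Finset.sum_const, Finset.card_powersetCard, nsmul_eq_mul]
  -- rewrite everything as sums over s
  have hmain : ∀ k : ℕ,
      ∑ j ∈ Finset.Icc r k,
        (-1 : ℝ) ^ (r + j) * ((j - 1).choose (r - 1)) *
          ∑ T ∈ Finset.powersetCard j (Finset.univ : Finset (Fin n)),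
            (P (⋂ l ∈ T, A l)).toReal
      = ∑ s ∈ (Finset.univ : Finset (Finset (Fin n))),
          (∑ j ∈ Finset.Icc r k,
            (-1 : ℝ) ^ (r + j) * ((j - 1).choose (r - 1)) * (s.card.choose j : ℝ))
            * (P (B s)).toReal := by
    intro k
    calc ∑ j ∈ Finset.Icc r k,
          (-1 : ℝ) ^ (r + j) * ((j - 1).choose (r - 1)) *
            ∑ T ∈ Finset.powersetCard j (Finset.univ : Finset (Fin n)),
              (P (⋂ l ∈ T, A l)).toReal
        = ∑ j ∈ Finset.Icc r k, ∑ s ∈ (Finset.univ : Finset (Finset (Fin n))),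
            (-1 : ℝ) ^ (r + j) * ((j - 1).choose (r - 1)) *
              ((s.card.choose j : ℝ) * (P (B s)).toReal) := by
          refine Finset.sum_congr rfl fun j _ => ?_
          rw [hS j, Finset.mul_sum]
      _ = ∑ s ∈ (Finset.univ : Finset (Finset (Fin n))), ∑ j ∈ Finset.Icc r k,
            (-1 : ℝ) ^ (r + j) * ((j - 1).choose (r - 1)) *
              ((s.card.choose j : ℝ) * (P (B s)).toReal) := Finset.sum_comm
      _ = ∑ s ∈ (Finset.univ : Finset (Finset (Fin n))),
            (∑ j ∈ Finset.Icc r k,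
              (-1 : ℝ) ^ (r + j) * ((j - 1).choose (r - 1)) * (s.card.choose j : ℝ))
              * (P (B s)).toReal := by
          refine Finset.sum_congr rfl fun s _ => ?_
          rw [Finset.sum_mul]
          exact Finset.sum_congr rfl fun j _ => by ring
  have hR : (P {ω | r ≤ (Finset.univ.filter (fun l => ω ∈ A l)).card}).toReal
      = ∑ s ∈ (Finset.univ : Finset (Finset (Fin n))),
          (if r ≤ s.card then (1:ℝ) else 0) * (P (B s)).toReal := by
    rw [key (fun s => r ≤ s.card), Finset.sum_filter]
    refine Finset.sum_congr rfl fun s _ => ?_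
    split_ifs <;> simp
  obtain ⟨m, hm⟩ := hi
  constructor
  · rw [hmain (r + i), hR]
    refine Finset.sum_le_sum fun s _ => ?_
    refine mul_le_mul_of_nonneg_right ?_ ENNReal.toReal_nonneg
    have hp := bonferroni_pointwise r (r + i) hr1 (by omega) s.card
    have hsgn : (-1 : ℝ) ^ (r + (r + i) + 1) = 1 :=
      Even.neg_one_pow ⟨r + m + 1, by omega⟩
    rw [hsgn, one_mul] at hp
    linarith
  · rw [hmain (r + i + 1), hR]
    refine Finset.sum_le_sum fun s _ => ?_
    refine mul_le_mul_of_nonneg_right ?_ ENNReal.toReal_nonneg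
    have hp := bonferroni_pointwise r (r + i + 1) hr1 (by omega) s.card
    have hsgn : (-1 : ℝ) ^ (r + (r + i + 1) + 1) = -1 :=
      Odd.neg_one_pow ⟨r + m + 1, by omega⟩
    rw [hsgn] at hp
    linarith
end

section
/- For all nonnegative integers m, k, r such that k ≥ r, Σ_{j=k+1}^{m} (-1)^j C(j-1, r-1) C(m, j) = (-1)^{k+1} Σ_{i=1}^{r} C(k-i, r-i) C(m-i, k-i+1). -/
/-- Binomial coefficient for integer arguments: `C t s = 0` if `min s t < 0` or
`s > t`, and `C t s = t!/(s!(t-s)!)` otherwise. -/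
def intChoose (t s : ℤ) : ℤ :=
  if 0 ≤ s ∧ s ≤ t then (t.toNat).choose s.toNat else 0

lemma intChoose_of_neg {t s : ℤ} (h : s < 0) : intChoose t s = 0 := by
  unfold intChoose; rw [if_neg]; omega

lemma intChoose_of_gt {t s : ℤ} (h : t < s) : intChoose t s = 0 := by
  unfold intChoose; rw [if_neg]; omega

lemma intChoose_zero {t : ℤ} (ht : 0 ≤ t) : intChoose t 0 = 1 := by
  unfold intChoose; rw [if_pos ⟨le_refl 0, ht⟩]; simp

lemma intChoose_natCast (n k : ℕ) : intChoose (n : ℤ) (k : ℤ) = (n.choose k : ℤ) := by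
  unfold intChoose
  by_cases h : (k : ℤ) ≤ n
  · rw [if_pos ⟨Int.natCast_nonneg k, h⟩]; simp
  · rw [if_neg (by omega), Nat.choose_eq_zero_of_lt (by omega)]; simp

lemma intChoose_pascal {t s : ℤ} (hs : 1 ≤ s) :
    intChoose t s = intChoose (t - 1) (s - 1) + intChoose (t - 1) s := by
  by_cases h : s ≤ t
  · obtain ⟨n, rfl⟩ := Int.eq_ofNat_of_zero_le (show (0:ℤ) ≤ t by omega)
    obtain ⟨kk, rfl⟩ := Int.eq_ofNat_of_zero_le (show (0:ℤ) ≤ s by omega)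
    obtain ⟨k, rfl⟩ : ∃ k', kk = k' + 1 := ⟨kk - 1, by omega⟩
    obtain ⟨n', rfl⟩ : ∃ n'', n = n'' + 1 := ⟨n - 1, by omega⟩
    have e1 : ((n' + 1 : ℕ) : ℤ) - 1 = (n' : ℤ) := by push_cast; ring
    have e2 : ((k + 1 : ℕ) : ℤ) - 1 = (k : ℤ) := by push_cast; ring
    rw [e1, e2, intChoose_natCast, intChoose_natCast, intChoose_natCast,
      Nat.choose_succ_succ]
    push_cast; ring
  · rw [intChoose_of_gt (by omega), intChoose_of_gt (by omega),
      intChoose_of_gt (by omega)]; ring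

lemma keyL (a b : ℤ) (ha : 0 ≤ a) (r : ℕ) :
    ∑ t ∈ Finset.range r,
      (intChoose (a + t) t * intChoose (b + t) (a + 1 + t)
        + intChoose (a + 1 + t) t * intChoose (b + t) (a + 2 + t))
      = intChoose (a + r) ((r : ℤ) - 1) * intChoose (b + r) (a + r + 1) := by
  induction r with
  | zero =>
    rw [Finset.sum_range_zero, intChoose_of_neg (show ((0:ℕ):ℤ) - 1 < 0 by norm_num), zero_mul]
  | succ n ih =>
    rw [Finset.sum_range_succ, ih]
    have hn : (0:ℤ) ≤ (n:ℤ) := Int.natCast_nonneg n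
    have hb : intChoose (b + (n:ℤ) + 1) (a + (n:ℤ) + 2)
        = intChoose (b + n) (a + n + 1) + intChoose (b + n) (a + n + 2) := by
      have h := intChoose_pascal (t := b + (n:ℤ) + 1) (s := a + (n:ℤ) + 2) (by omega)
      rw [show b + (n:ℤ) + 1 - 1 = b + n by ring,
        show a + (n:ℤ) + 2 - 1 = a + n + 1 by ring] at h
      exact h
    have ha' : intChoose (a + (n:ℤ) + 1) (n : ℤ)
        = intChoose (a + n) ((n:ℤ) - 1) + intChoose (a + n) (n:ℤ) := by
      rcases Nat.eq_zero_or_pos n with h0 | h0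
      · subst h0
        norm_num
        rw [intChoose_zero (show (0:ℤ) ≤ a + 1 by omega), intChoose_zero ha,
          intChoose_of_neg (show (-1:ℤ) < 0 by norm_num)]
        ring
      · have h := intChoose_pascal (t := a + (n:ℤ) + 1) (s := (n:ℤ))
          (by exact_mod_cast h0)
        rw [show a + (n:ℤ) + 1 - 1 = a + n by ring] at h
        exact h
    have e1 : ((n + 1 : ℕ) : ℤ) = (n : ℤ) + 1 := by push_cast; ring
    rw [e1, show a + ((n:ℤ) + 1) = a + n + 1 by ring,
      show b + ((n:ℤ) + 1) = b + n + 1 by ring,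
      show (n:ℤ) + 1 - 1 = (n:ℤ) by ring,
      show a + (n:ℤ) + 1 + 1 = a + n + 2 by ring,
      show a + 1 + (n:ℤ) = a + n + 1 by ring,
      show a + 2 + (n:ℤ) = a + n + 2 by ring,
      hb, ha']
    ring

lemma keyK (m k r : ℕ) (hrk : r ≤ k) :
    (∑ i ∈ Finset.Icc 1 r,
        intChoose ((k:ℤ) - i) ((r:ℤ) - i) * intChoose ((m:ℤ) - i) ((k:ℤ) - i + 1))
      + (∑ i ∈ Finset.Icc 1 r,
        intChoose ((k:ℤ) + 1 - i) ((r:ℤ) - i) * intChoose ((m:ℤ) - i) ((k:ℤ) - i + 2))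
      = intChoose (k:ℤ) ((r:ℤ) - 1) * intChoose (m:ℤ) ((k:ℤ) + 1) := by
  have h := keyL ((k:ℤ) - r) ((m:ℤ) - r) (by omega) r
  rw [show (k:ℤ) - r + r = (k:ℤ) by ring, show (m:ℤ) - r + r = (m:ℤ) by ring] at h
  rw [← Finset.sum_add_distrib, ← h]
  refine Finset.sum_bij' (fun i _ => r - i) (fun t _ => r - t) ?_ ?_ ?_ ?_ ?_
  · intro i hi
    simp only [Finset.mem_Icc] at hi
    simp only [Finset.mem_range]; omega
  · intro t ht
    simp only [Finset.mem_range] at ht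
    simp only [Finset.mem_Icc]; omega
  · intro i hi
    simp only [Finset.mem_Icc] at hi
    omega
  · intro t ht
    simp only [Finset.mem_range] at ht
    omega
  · intro i hi
    simp only [Finset.mem_Icc] at hi
    have e : ((r - i : ℕ) : ℤ) = (r : ℤ) - i := by omega
    rw [e, show (k:ℤ) - r + ((r:ℤ) - i) = (k:ℤ) - i by ring,
      show (m:ℤ) - r + ((r:ℤ) - i) = (m:ℤ) - i by ring,
      show (k:ℤ) - r + 1 + ((r:ℤ) - i) = (k:ℤ) - i + 1 by ring,
      show (k:ℤ) - r + 2 + ((r:ℤ) - i) = (k:ℤ) - i + 2 by ring]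
    have e2 : (k:ℤ) + 1 - i = (k:ℤ) - i + 1 := by ring
    rw [e2]

lemma base_case (m k r : ℕ) (hmk : m ≤ k) :
    ∑ j ∈ Finset.Icc (k + 1) m,
        (-1 : ℤ) ^ j * intChoose ((j : ℤ) - 1) ((r : ℤ) - 1) * intChoose (m : ℤ) (j : ℤ)
      = (-1 : ℤ) ^ (k + 1) *
          ∑ i ∈ Finset.Icc 1 r,
            intChoose ((k : ℤ) - i) ((r : ℤ) - i) * intChoose ((m : ℤ) - i) ((k : ℤ) - i + 1) := by
  rw [Finset.Icc_eq_empty (by omega), Finset.sum_empty]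
  rw [Finset.sum_eq_zero, mul_zero]
  intro i hi
  simp only [Finset.mem_Icc] at hi
  rw [intChoose_of_gt (show (m:ℤ) - i < (k:ℤ) - i + 1 by omega), mul_zero]

lemma main_aux (m r : ℕ) : ∀ d k : ℕ, m ≤ k + d → r ≤ k →
    ∑ j ∈ Finset.Icc (k + 1) m,
        (-1 : ℤ) ^ j * intChoose ((j : ℤ) - 1) ((r : ℤ) - 1) * intChoose (m : ℤ) (j : ℤ)
      = (-1 : ℤ) ^ (k + 1) *
          ∑ i ∈ Finset.Icc 1 r,
            intChoose ((k : ℤ) - i) ((r : ℤ) - i) * intChoose ((m : ℤ) - i) ((k : ℤ) - i + 1) := by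
  intro d
  induction d with
  | zero => intro k h hrk; exact base_case m k r (by omega)
  | succ d ih =>
    intro k h hrk
    by_cases hmk : m ≤ k
    · exact base_case m k r hmk
    · push_neg at hmk
      have hsplit : Finset.Icc (k + 1) m = Finset.cons (k + 1) (Finset.Icc (k + 2) m)
          (by simp) := by
        rw [Finset.Icc_eq_cons_Ioc (by omega)]
        congr 1
        rw [← Finset.Icc_add_one_left_eq_Ioc]; rfl
      rw [hsplit, Finset.sum_cons]
      rw [ih (k + 1) (by omega) (by omega)]
      have hK := keyK m k r hrk
      have e1 : (((k:ℕ) + 1 : ℕ) : ℤ) - 1 = (k : ℤ) := by push_cast; ring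
      have e2 : (((k:ℕ) + 1 : ℕ) : ℤ) = (k : ℤ) + 1 := by push_cast; ring
      rw [e1]
      simp only [e2]
      have e3 : ∀ i : ℕ, (k:ℤ) + 1 - (i:ℤ) + 1 = (k:ℤ) - i + 2 := by intro i; ring
      simp only [e3]
      rw [show k + 1 + 1 = k + 2 from rfl, pow_succ ((-1:ℤ)) (k+1)]
      linear_combination ((-1:ℤ)) ^ k * hK

/-- for all nonnegative integers `m, k, r` with `k ≥ r`,
`∑_{j=k+1}^{m} (-1)^j C(j-1, r-1) C(m, j)
  = (-1)^{k+1} ∑_{i=1}^{r} C(k-i, r-i) C(m-i, k-i+1)`. -/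
theorem alternating_tail_sum_eq (m k r : ℕ) (hrk : r ≤ k) :
    ∑ j ∈ Finset.Icc (k + 1) m,
        (-1 : ℤ) ^ j * intChoose ((j : ℤ) - 1) ((r : ℤ) - 1) * intChoose (m : ℤ) (j : ℤ)
      = (-1 : ℤ) ^ (k + 1) *
          ∑ i ∈ Finset.Icc 1 r,
            intChoose ((k : ℤ) - i) ((r : ℤ) - i) * intChoose ((m : ℤ) - i) ((k : ℤ) - i + 1) := by
  exact main_aux m r m k (by omega) hrk
end

section
/- For all integers i, k, n, x with 1 ≤ i ≤ k+1 ≤ n and 0 ≤ x ≤ n, the inequality C(x-i, k+1-i) · C(n, k+1) ≥ C(x, k+1) · C(n-i, k+1-i) holds; equivalently, since C(n-i, k+1-i)/C(n, k+1) = C(k+1, i)/C(n, i), one has C(x-i, k+1-i) ≥ C(x, k+1) · C(k+1, i)/C(n, i). -/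
lemma intChoose_nonneg (t s : ℤ) : 0 ≤ intChoose t s := by
  unfold intChoose; split <;> positivity

lemma intChoose_natCast_s6 (t s : ℕ) : intChoose (t : ℤ) (s : ℤ) = (t.choose s : ℤ) := by
  unfold intChoose
  by_cases h : s ≤ t
  · simp [h]
  · rw [if_neg, Nat.choose_eq_zero_of_lt (by omega)]
    · simp
    · push_neg; intro _; exact_mod_cast Nat.lt_of_not_le h

lemma key_nat (n k i x : ℕ) (hik : i ≤ k + 1) (hx : k + 1 ≤ x) (hxn : x ≤ n) :
    x.choose (k+1) * (n-i).choose (k+1-i) ≤ (x-i).choose (k+1-i) * n.choose (k+1) := by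
  have h1 := Nat.choose_mul (n := x) hik
  have h2 := Nat.choose_mul (n := n) hik
  set A := x.choose (k+1); set B := n.choose (k+1)
  set C := (x-i).choose (k+1-i); set D := (n-i).choose (k+1-i)
  set e := (k+1).choose i; set a := x.choose i; set b := n.choose i
  have he : 0 < e := Nat.choose_pos hik
  have hb : 0 < b := Nat.choose_pos (by omega)
  have hab : a ≤ b := Nat.choose_le_choose i hxn
  have hmul : A * D * (e * b) ≤ C * B * (e * b) := by
    calc A * D * (e * b) = (A * e) * (b * D) := by ring
      _ = (a * C) * (B * e) := by rw [h1, h2]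
      _ = (C * B * e) * a := by ring
      _ ≤ (C * B * e) * b := Nat.mul_le_mul_left _ hab
      _ = C * B * (e * b) := by ring
  exact Nat.le_of_mul_le_mul_right hmul (Nat.mul_pos he hb)

/-- for integers `1 ≤ i ≤ k+1 ≤ n` and `0 ≤ x ≤ n`,
`C(x-i, k+1-i) · C(n, k+1) ≥ C(x, k+1) · C(n-i, k+1-i)`; equivalently,
`C(x-i, k+1-i) ≥ C(x, k+1) · C(k+1, i) / C(n, i)`. -/
theorem choose_ratio_ineq (n k i x : ℕ) (hi1 : 1 ≤ i) (hik : i ≤ k + 1)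
    (hkn : k + 1 ≤ n) (hxn : x ≤ n) :
    intChoose ((x : ℤ) - i) ((k : ℤ) + 1 - i) * intChoose (n : ℤ) ((k : ℤ) + 1)
        ≥ intChoose (x : ℤ) ((k : ℤ) + 1) * intChoose ((n : ℤ) - i) ((k : ℤ) + 1 - i)
      ∧ ((intChoose ((x : ℤ) - i) ((k : ℤ) + 1 - i) : ℤ) : ℝ)
        ≥ (x.choose (k + 1) : ℝ) * ((k + 1).choose i : ℝ) / (n.choose i : ℝ) := by
  have hnb : (0:ℝ) < (n.choose i : ℝ) := by
    exact_mod_cast Nat.choose_pos (show i ≤ n by omega)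
  by_cases hx : k + 1 ≤ x
  · -- non-degenerate case: rewrite everything as nat casts
    have e1 : intChoose ((x : ℤ) - i) ((k : ℤ) + 1 - i)
        = ((x - i).choose (k + 1 - i) : ℤ) := by
      rw [show ((x:ℤ) - i) = ((x - i : ℕ) : ℤ) by push_cast [Nat.cast_sub (by omega : i ≤ x)]; ring,
        show ((k:ℤ) + 1 - i) = ((k + 1 - i : ℕ) : ℤ) by
          push_cast [Nat.cast_sub (by omega : i ≤ k+1)]; ring,
        intChoose_natCast_s6]
    have e2 : intChoose ((n : ℤ) - i) ((k : ℤ) + 1 - i)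
        = ((n - i).choose (k + 1 - i) : ℤ) := by
      rw [show ((n:ℤ) - i) = ((n - i : ℕ) : ℤ) by push_cast [Nat.cast_sub (by omega : i ≤ n)]; ring,
        show ((k:ℤ) + 1 - i) = ((k + 1 - i : ℕ) : ℤ) by
          push_cast [Nat.cast_sub (by omega : i ≤ k+1)]; ring,
        intChoose_natCast_s6]
    have e3 : intChoose (x : ℤ) ((k : ℤ) + 1) = (x.choose (k+1) : ℤ) := by
      rw [show ((k:ℤ) + 1) = ((k + 1 : ℕ) : ℤ) by push_cast; ring, intChoose_natCast_s6]
    have e4 : intChoose (n : ℤ) ((k : ℤ) + 1) = (n.choose (k+1) : ℤ) := by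
      rw [show ((k:ℤ) + 1) = ((k + 1 : ℕ) : ℤ) by push_cast; ring, intChoose_natCast_s6]
    have hkey := key_nat n k i x hik hx hxn
    constructor
    · rw [e1, e2, e3, e4]
      exact_mod_cast hkey
    · rw [e1]
      rw [ge_iff_le, div_le_iff₀ hnb]
      have h1 := Nat.choose_mul (n := x) hik
      have hab : x.choose i ≤ n.choose i := Nat.choose_le_choose i hxn
      have : x.choose (k+1) * (k+1).choose i ≤ (x-i).choose (k+1-i) * n.choose i := by
        calc x.choose (k+1) * (k+1).choose i = x.choose i * (x-i).choose (k+1-i) := h1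
          _ ≤ n.choose i * (x-i).choose (k+1-i) := Nat.mul_le_mul_right _ hab
          _ = (x-i).choose (k+1-i) * n.choose i := Nat.mul_comm _ _
      exact_mod_cast this
  · -- degenerate case: x < k+1
    have e3 : intChoose (x : ℤ) ((k : ℤ) + 1) = 0 := by
      rw [show ((k:ℤ) + 1) = ((k + 1 : ℕ) : ℤ) by push_cast; ring, intChoose_natCast_s6,
        Nat.choose_eq_zero_of_lt (by omega)]
      simp
    have hx0 : x.choose (k+1) = 0 := Nat.choose_eq_zero_of_lt (by omega)
    constructor
    · rw [e3, zero_mul]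
      exact mul_nonneg (intChoose_nonneg _ _) (intChoose_nonneg _ _)
    · rw [hx0]
      simp only [Nat.cast_zero, zero_mul, zero_div]
      exact_mod_cast intChoose_nonneg _ _
end

section
/- For all integers i, k with 1 ≤ i ≤ k+1 ≤ n, E[C(X-i, k+1-i)] ≥ (C(k+1, i)/C(n, i)) · S_{k+1}. -/
open MeasureTheory Finset
open scoped Classical

lemma intChoose_nat_sub (x i k : ℕ) (hik : i ≤ k + 1) :
    intChoose ((x : ℤ) - i) ((k : ℤ) + 1 - i)
      = if k + 1 ≤ x then ((x - i).choose (k + 1 - i) : ℤ) else 0 := by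
  unfold intChoose
  have hs : (0 : ℤ) ≤ (k : ℤ) + 1 - i := by
    have : (i : ℤ) ≤ (k : ℤ) + 1 := by exact_mod_cast hik
    omega
  by_cases h : k + 1 ≤ x
  · have hix : i ≤ x := le_trans hik h
    have hc : (k : ℤ) + 1 - i ≤ (x : ℤ) - i := by
      have : (k : ℤ) + 1 ≤ x := by exact_mod_cast h
      omega
    have h1 : ((x : ℤ) - i).toNat = x - i := by omega
    have h2 : ((k : ℤ) + 1 - i).toNat = k + 1 - i := by omega
    rw [if_pos ⟨hs, hc⟩, if_pos h, h1, h2]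
  · rw [if_neg, if_neg h]
    rintro ⟨-, hc⟩
    apply h
    have : (k : ℤ) + 1 ≤ (x : ℤ) := by omega
    exact_mod_cast this

lemma key_pointwise (n i k x : ℕ) (hik : i ≤ k + 1) (hkn : k + 1 ≤ n) (hxn : x ≤ n) :
    ((k + 1).choose i : ℝ) / (n.choose i : ℝ) * (x.choose (k + 1) : ℝ)
      ≤ ((if k + 1 ≤ x then ((x - i).choose (k + 1 - i) : ℤ) else 0 : ℤ) : ℝ) := by
  have hpos : (0 : ℝ) < (n.choose i : ℝ) := by
    exact_mod_cast Nat.choose_pos (le_trans hik hkn)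
  by_cases h : k + 1 ≤ x
  · rw [if_pos h]
    rw [div_mul_eq_mul_div, div_le_iff₀ hpos]
    push_cast
    have key : x.choose (k + 1) * (k + 1).choose i = x.choose i * (x - i).choose (k + 1 - i) :=
      Nat.choose_mul hik
    have hle : x.choose i ≤ n.choose i := Nat.choose_le_choose i hxn
    have : (k + 1).choose i * x.choose (k + 1) ≤ (x - i).choose (k + 1 - i) * n.choose i := by
      calc (k + 1).choose i * x.choose (k + 1) = x.choose i * (x - i).choose (k + 1 - i) := by
            rw [mul_comm]; exact key
        _ ≤ n.choose i * (x - i).choose (k + 1 - i) :=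
            Nat.mul_le_mul_right _ hle
        _ = (x - i).choose (k + 1 - i) * n.choose i := mul_comm _ _
    exact_mod_cast this
  · rw [if_neg h]
    have : x.choose (k + 1) = 0 := Nat.choose_eq_zero_of_lt (by omega)
    rw [this]
    simp

/-- for `1 ≤ i ≤ k+1 ≤ n`,
`E[C(X-i, k+1-i)] ≥ (C(k+1, i)/C(n, i)) · S_{k+1}`. -/
theorem expectation_choose_ge
    {Ω : Type*} [MeasurableSpace Ω] (P : Measure Ω) [IsProbabilityMeasure P]
    (n : ℕ) (A : Fin n → Set Ω) (hA : ∀ l, MeasurableSet (A l))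
    (i k : ℕ) (hi1 : 1 ≤ i) (hik : i ≤ k + 1) (hkn : k + 1 ≤ n) :
    (∫ ω, ((intChoose (((Finset.univ.filter (fun l => ω ∈ A l)).card : ℤ) - i)
        ((k : ℤ) + 1 - i) : ℤ) : ℝ) ∂P)
      ≥ ((k + 1).choose i : ℝ) / (n.choose i : ℝ) *
          ∑ T ∈ Finset.powersetCard (k + 1) (Finset.univ : Finset (Fin n)),
            (P (⋂ l ∈ T, A l)).toReal := by
  set c : ℝ := ((k + 1).choose i : ℝ) / (n.choose i : ℝ) with hc
  have hc0 : 0 ≤ c := by positivity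
  set X : Ω → ℕ := fun ω => (Finset.univ.filter (fun l => ω ∈ A l)).card with hX
  -- measurability of X
  have hXmeas : Measurable X := by
    have : X = fun ω => ∑ l : Fin n, if ω ∈ A l then 1 else 0 := by
      funext ω; exact Finset.card_filter _ _
    rw [this]
    exact Finset.measurable_sum _ fun l _ =>
      Measurable.ite (hA l) measurable_const measurable_const
  set f : Ω → ℝ := fun ω =>
    ((intChoose ((X ω : ℤ) - i) ((k : ℤ) + 1 - i) : ℤ) : ℝ) with hf
  set g : Ω → ℝ := fun ω =>
    ∑ T ∈ Finset.powersetCard (k + 1) (Finset.univ : Finset (Fin n)),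
      (⋂ l ∈ T, A l).indicator (fun _ => c) ω with hg
  have hXle : ∀ ω, X ω ≤ n := fun ω => by
    simpa using Finset.card_filter_le Finset.univ (fun l => ω ∈ A l)
  -- f measurable
  have hfmeas : Measurable f :=
    (measurable_from_top (f := fun m : ℕ =>
      ((intChoose ((m : ℤ) - i) ((k : ℤ) + 1 - i) : ℤ) : ℝ))).comp hXmeas
  -- f integrable (bounded)
  have hfint : Integrable f P := by
    refine ⟨hfmeas.aestronglyMeasurable, ?_⟩
    apply HasFiniteIntegral.of_bounded (C := (n.choose (k + 1 - i) : ℝ))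
    refine Filter.Eventually.of_forall fun ω => ?_
    rw [hf]
    simp only [Real.norm_eq_abs]
    rw [intChoose_nat_sub _ _ _ hik]
    by_cases h : k + 1 ≤ X ω
    · rw [if_pos h]
      rw [abs_of_nonneg (by positivity)]
      push_cast
      exact_mod_cast Nat.choose_le_choose _ (Nat.sub_le_of_le_add (le_trans (hXle ω) (by omega)))
    · rw [if_neg h]; simp
  -- g integrable
  have hgint : Integrable g P := by
    apply integrable_finset_sum
    intro T hT
    exact (integrable_const c).indicator (MeasurableSet.biInter (Set.to_countable _)
      fun l _ => hA l)
  -- pointwise g ≤ f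
  have hle : ∀ ω, g ω ≤ f ω := by
    intro ω
    have hcard : (Finset.powersetCard (k + 1)
        (Finset.univ.filter (fun l => ω ∈ A l))).card = (X ω).choose (k + 1) := by
      rw [Finset.card_powersetCard]
    have hgval : g ω = c * ((X ω).choose (k + 1) : ℝ) := by
      simp only [hg]
      rw [Finset.sum_indicator_eq_sum_filter]
      have hset : Finset.filter (fun T => ω ∈ ⋂ l ∈ T, A l)
          (Finset.powersetCard (k + 1) (Finset.univ : Finset (Fin n)))
          = Finset.powersetCard (k + 1) (Finset.univ.filter (fun l => ω ∈ A l)) := by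
        ext T
        simp only [Finset.mem_filter, Finset.mem_powersetCard, Set.mem_iInter,
          Finset.subset_iff, Finset.mem_univ, true_and]
        tauto
      rw [hset, Finset.sum_const, hcard, nsmul_eq_mul, mul_comm]
    rw [hgval, hf]
    simp only
    rw [intChoose_nat_sub _ _ _ hik]
    exact key_pointwise n i k (X ω) hik hkn (hXle ω)
  -- integral of g
  have hgint_eq : ∫ ω, g ω ∂P = c *
      ∑ T ∈ Finset.powersetCard (k + 1) (Finset.univ : Finset (Fin n)),
        (P (⋂ l ∈ T, A l)).toReal := by
    have step1 : ∫ ω, g ω ∂P = ∑ T ∈ Finset.powersetCard (k + 1)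
        (Finset.univ : Finset (Fin n)),
        ∫ ω, (⋂ l ∈ T, A l).indicator (fun _ => c) ω ∂P := by
      simp only [hg]
      exact integral_finset_sum _ (fun T hT => (integrable_const c).indicator
        (MeasurableSet.biInter (Set.to_countable _) fun l _ => hA l))
    rw [step1, Finset.mul_sum]
    refine Finset.sum_congr rfl fun T _ => ?_
    have hmeas : MeasurableSet (⋂ l ∈ T, A l) :=
      MeasurableSet.biInter (Set.to_countable _) fun l _ => hA l
    rw [integral_indicator_const c hmeas, smul_eq_mul, mul_comm]
    rfl
  calc c * ∑ T ∈ Finset.powersetCard (k + 1) (Finset.univ : Finset (Fin n)),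
        (P (⋂ l ∈ T, A l)).toReal = ∫ ω, g ω ∂P := hgint_eq.symm
    _ ≤ ∫ ω, f ω ∂P := integral_mono hgint hfint hle
    _ = _ := rfl
end

section
/- For all integers k, r with 1 ≤ r ≤ k ≤ n-1 and r + k odd, P(X ≥ r) ≥ Σ_{j=r}^{k} (-1)^{r+j} C(j-1, r-1) S_j + (Σ_{i=1}^{r} C(k-i, r-i) · C(k+1, i)/C(n, i)) · S_{k+1}. -/
open MeasureTheory Finset
open scoped Classical

-- L1: double-binomial identity (induction on r)
lemma ibl_L1 (a s : ℕ) : ∀ r : ℕ,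
    ∑ i ∈ range r, ((a+1+i).choose i * (s+i).choose (a+2+i)
        + (a+i).choose i * (s+i).choose (a+1+i))
      = (a+r).choose (a+1) * (r+s).choose (a+r+1) := by
  intro r
  induction r with
  | zero => simp [Nat.choose_eq_zero_of_lt (by omega : a < a+1)]
  | succ r ih =>
    rw [Finset.sum_range_succ, ih]
    have e1 : (a+1+r).choose r = (a+r).choose a + (a+r).choose (a+1) := by
      have h : (a+1+r).choose r = (a+1+r).choose (a+1) := by
        rw [← Nat.choose_symm (by omega : a+1 ≤ a+1+r)]; congr 1; omega
      rw [h, show a+1+r = (a+r)+1 by omega, Nat.choose_succ_succ]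
    have e2 : (a+r).choose r = (a+r).choose a := by
      rw [← Nat.choose_symm (by omega : a ≤ a+r)]; congr 1; omega
    have e3 : (a+(r+1)).choose (a+1) = (a+r).choose a + (a+r).choose (a+1) := by
      rw [show a+(r+1) = (a+r)+1 by omega, Nat.choose_succ_succ]
    have e4 : (r+1+s).choose (a+(r+1)+1) = (r+s).choose (a+r+1) + (r+s).choose (a+r+2) := by
      rw [show r+1+s = (r+s)+1 by omega, show a+(r+1)+1 = (a+r+1)+1 by omega,
        Nat.choose_succ_succ]
    have e5 : (s+r) = r+s := by omega
    have e6 : a+2+r = a+r+2 := by omega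
    rw [e3, e4, e5, e6, e1, e2]
    ring

-- hockey stick variant
lemma ibl_hs (b : ℕ) : ∀ r : ℕ,
    1 + ∑ j ∈ range r, (b+1+j).choose (j+1) = (b+1+r).choose r := by
  intro r
  induction r with
  | zero => simp
  | succ r ih =>
    rw [Finset.sum_range_succ, ← add_assoc, ih,
      show b+1+(r+1) = (b+1+r)+1 by omega, Nat.choose_succ_succ]

-- reindexing Icc 1 r -> range r
lemma ibl_reindex {M : Type*} [AddCommMonoid M] (r : ℕ) (f : ℕ → M) :
    ∑ i ∈ Icc 1 r, f i = ∑ j ∈ range r, f (r - j) := by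
  refine Finset.sum_bij' (fun i _ => r - i) (fun j _ => r - j) ?_ ?_ ?_ ?_ ?_
  all_goals intro a ha
  all_goals simp only [mem_Icc, mem_range] at ha ⊢
  · omega
  · omega
  · omega
  · omega
  · congr 1; omega

-- Lemma 3 (base case identity)
lemma ibl_base (r m : ℕ) (hr : 1 ≤ r) :
    m.choose r = (if r ≤ m then 1 else 0)
      + ∑ i ∈ Icc 1 r, (m-i).choose (r+1-i) := by
  rcases lt_or_ge m r with h | h
  · have hz : ∑ i ∈ Icc 1 r, (m-i).choose (r+1-i) = 0 := by
      refine Finset.sum_eq_zero fun i hi => ?_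
      simp only [mem_Icc] at hi
      exact Nat.choose_eq_zero_of_lt (by omega)
    rw [if_neg (by omega), Nat.choose_eq_zero_of_lt h, hz]
  rcases eq_or_lt_of_le h with rfl | h2
  · have hz : ∑ i ∈ Icc 1 r, (r-i).choose (r+1-i) = 0 := by
      refine Finset.sum_eq_zero fun i hi => ?_
      simp only [mem_Icc] at hi
      exact Nat.choose_eq_zero_of_lt (by omega)
    rw [if_pos le_rfl, hz, Nat.choose_self]
  · rw [if_pos (by omega), ibl_reindex]
    have hcg : ∀ j ∈ range r, (m-(r-j)).choose (r+1-(r-j)) = (m-r-1+1+j).choose (j+1) := by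
      intro j hj
      simp only [mem_range] at hj
      congr 1 <;> omega
    rw [Finset.sum_congr rfl hcg, ibl_hs]
    congr 1; omega

-- Lemma 2 (dagger): E(k+1)+E(k) = C(k,r-1) C(m,k+1)
lemma ibl_dagger (r k m : ℕ) (hr : 1 ≤ r) (hrk : r ≤ k) :
    (∑ i ∈ Icc 1 r, (k+1-i).choose (r-i) * (m-i).choose (k+2-i))
      + (∑ i ∈ Icc 1 r, (k-i).choose (r-i) * (m-i).choose (k+1-i))
      = k.choose (r-1) * m.choose (k+1) := by
  rcases lt_or_ge m r with h | h
  · have hz1 : ∑ i ∈ Icc 1 r, (k+1-i).choose (r-i) * (m-i).choose (k+2-i) = 0 := by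
      refine Finset.sum_eq_zero fun i hi => ?_
      simp only [mem_Icc] at hi
      rw [Nat.choose_eq_zero_of_lt (show m-i < k+2-i by omega), Nat.mul_zero]
    have hz2 : ∑ i ∈ Icc 1 r, (k-i).choose (r-i) * (m-i).choose (k+1-i) = 0 := by
      refine Finset.sum_eq_zero fun i hi => ?_
      simp only [mem_Icc] at hi
      rw [Nat.choose_eq_zero_of_lt (show m-i < k+1-i by omega), Nat.mul_zero]
    rw [hz1, hz2, Nat.choose_eq_zero_of_lt (show m < k+1 by omega), Nat.mul_zero]
  · rw [ibl_reindex, ibl_reindex]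
    have h1 : ∀ j ∈ range r, (k+1-(r-j)).choose (r-(r-j)) * (m-(r-j)).choose (k+2-(r-j))
        = ((k-r)+1+j).choose j * ((m-r)+j).choose ((k-r)+2+j) := by
      intro j hj; simp only [mem_range] at hj
      congr 2 <;> omega
    have h2 : ∀ j ∈ range r, (k-(r-j)).choose (r-(r-j)) * (m-(r-j)).choose (k+1-(r-j))
        = ((k-r)+j).choose j * ((m-r)+j).choose ((k-r)+1+j) := by
      intro j hj; simp only [mem_range] at hj
      congr 2 <;> omega
    rw [Finset.sum_congr rfl h1, Finset.sum_congr rfl h2, ← Finset.sum_add_distrib,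
      ibl_L1 (k-r) (m-r) r]
    have e1 : (k-r)+r = k := by omega
    have e2 : r+(m-r) = m := by omega
    have e3 : (k-r)+r+1 = k+1 := by omega
    rw [e3, e1, e2]
    congr 1
    rw [← Nat.choose_symm (by omega : r-1 ≤ k)]
    congr 1; omega

-- Lemma 4: signed identity over ℝ
lemma ibl_main (r m : ℕ) (hr : 1 ≤ r) : ∀ k, r ≤ k →
    (∑ j ∈ Icc r k, (-1:ℝ)^(j-r) * ((j-1).choose (r-1)) * (m.choose j))
      + (-1:ℝ)^(k-r+1) *
        (∑ i ∈ Icc 1 r, ((k-i).choose (r-i) : ℝ) * ((m-i).choose (k+1-i) : ℝ))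
      = if r ≤ m then 1 else 0 := by
  intro k hrk
  induction k, hrk using Nat.le_induction with
  | base =>
    rw [Finset.Icc_self, Finset.sum_singleton]
    have hb := congrArg (fun x : ℕ => (x : ℝ)) (ibl_base r m hr)
    push_cast at hb
    have hE : ∑ i ∈ Icc 1 r, ((r-i).choose (r-i) : ℝ) * ((m-i).choose (r+1-i) : ℝ)
        = ∑ i ∈ Icc 1 r, ((m-i).choose (r+1-i) : ℝ) := by
      refine Finset.sum_congr rfl fun i hi => ?_
      rw [Nat.choose_self]; push_cast; ring
    rw [show r - r + 1 = 1 by omega, pow_one, show r - r = 0 by omega, pow_zero,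
      Nat.choose_self, hE]
    push_cast
    linarith [hb]
  | succ k hk ih =>
    rw [Finset.sum_Icc_succ_top (by omega : r ≤ k+1)]
    have hd := congrArg (fun x : ℕ => (x : ℝ)) (ibl_dagger r k m hr hk)
    push_cast at hd
    have hpow1 : (-1:ℝ)^(k+1-r) = -(-1:ℝ)^(k-r) := by
      rw [show k+1-r = (k-r)+1 by omega, pow_succ]; ring
    have hpow2 : (-1:ℝ)^(k+1-r+1) = (-1:ℝ)^(k-r) := by
      rw [show k+1-r+1 = (k-r)+2 by omega, pow_add]; norm_num
    have hpow3 : (-1:ℝ)^(k-r+1) = -(-1:ℝ)^(k-r) := by rw [pow_succ]; ring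
    rw [show k+1+1 = k+2 by omega, show k+1-1 = k by omega, hpow1, hpow2]
    rw [hpow3] at ih
    linear_combination ih + ((-1:ℝ)^(k-r)) * hd

-- Lemma 5: pointwise inequality
lemma ibl_pointwise (n r k m : ℕ) (hr : 1 ≤ r) (hrk : r ≤ k) (hkn : k+1 ≤ n)
    (hmn : m ≤ n) (hodd : Odd (r+k)) :
    (∑ j ∈ Icc r k, (-1:ℝ)^(r+j) * ((j-1).choose (r-1)) * (m.choose j))
      + (∑ i ∈ Icc 1 r, ((k-i).choose (r-i) : ℝ) * ((k+1).choose i : ℝ) / (n.choose i : ℝ))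
          * (m.choose (k+1) : ℝ)
      ≤ if r ≤ m then 1 else 0 := by
  have hsign : (∑ j ∈ Icc r k, (-1:ℝ)^(r+j) * ((j-1).choose (r-1)) * (m.choose j))
      = ∑ j ∈ Icc r k, (-1:ℝ)^(j-r) * ((j-1).choose (r-1)) * (m.choose j) := by
    refine Finset.sum_congr rfl fun j hj => ?_
    simp only [mem_Icc] at hj
    rw [show r + j = (j-r)+2*r by omega, pow_add, pow_mul]
    norm_num
  have heven : Even (k-r+1) := ⟨(k-r+1)/2, by obtain ⟨t, ht⟩ := hodd; omega⟩
  have hmain := ibl_main r m hr k hrk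
  rw [heven.neg_one_pow, one_mul] at hmain
  have hineq : (∑ i ∈ Icc 1 r, ((k-i).choose (r-i) : ℝ) * ((k+1).choose i : ℝ) / (n.choose i : ℝ))
        * (m.choose (k+1) : ℝ)
      ≤ ∑ i ∈ Icc 1 r, ((k-i).choose (r-i) : ℝ) * ((m-i).choose (k+1-i) : ℝ) := by
    rw [Finset.sum_mul]
    refine Finset.sum_le_sum fun i hi => ?_
    simp only [mem_Icc] at hi
    have hn0 : (0:ℝ) < (n.choose i : ℝ) := by
      exact_mod_cast Nat.cast_pos.mpr (Nat.choose_pos (by omega : i ≤ n))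
    rw [div_mul_eq_mul_div, div_le_iff₀ hn0]
    have hkeyN : m.choose (k+1) * (k+1).choose i ≤ (m-i).choose (k+1-i) * n.choose i := by
      have key : m.choose (k+1) * (k+1).choose i = m.choose i * ((m-i).choose (k+1-i)) := by
        rcases le_or_gt (k+1) m with hm | hm
        · exact Nat.choose_mul (by omega)
        · rcases le_or_gt i m with him | him
          · rw [Nat.choose_eq_zero_of_lt (show m < k+1 by omega),
              Nat.choose_eq_zero_of_lt (show m-i < k+1-i by omega)]
            ring
          · rw [Nat.choose_eq_zero_of_lt (show m < k+1 by omega),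
              Nat.choose_eq_zero_of_lt (show m < i by omega)]
            ring
      rw [key, Nat.mul_comm ((m-i).choose (k+1-i)) (n.choose i)]
      exact Nat.mul_le_mul_right _ (Nat.choose_le_choose i hmn)
    have hkey : (m.choose (k+1) * (k+1).choose i : ℝ) ≤ ((m-i).choose (k+1-i) : ℝ) * (n.choose i : ℝ) := by
      exact_mod_cast hkeyN
    have a0 : (0:ℝ) ≤ ((k-i).choose (r-i) : ℝ) := by positivity
    have h2 := mul_le_mul_of_nonneg_left hkey a0
    nlinarith [h2]
  rw [hsign]
  linarith [hmain, hineq]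

section
variable {Ω : Type*} [MeasurableSpace Ω] (P : Measure Ω) [IsProbabilityMeasure P]
  {n : ℕ} (A : Fin n → Set Ω)

noncomputable def iblp (s : Finset (Fin n)) : ℝ :=
  (P {ω | Finset.univ.filter (fun l => ω ∈ A l) = s}).toReal

lemma iblBmeas (hA : ∀ l, MeasurableSet (A l)) (s : Finset (Fin n)) :
    MeasurableSet {ω | Finset.univ.filter (fun l => ω ∈ A l) = s} := by
  have hset : {ω | Finset.univ.filter (fun l => ω ∈ A l) = s}
      = ⋂ l, (if l ∈ s then A l else (A l)ᶜ) := by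
    ext ω
    simp only [Set.mem_setOf_eq, Set.mem_iInter, Finset.ext_iff, Finset.mem_filter,
      Finset.mem_univ, true_and]
    refine forall_congr' fun l => ?_
    by_cases hl : l ∈ s <;> simp [hl]
  rw [hset]
  exact MeasurableSet.iInter fun l => by
    by_cases hl : l ∈ s <;> simp [hl, hA l, (hA l).compl]

lemma iblmeasF (hA : ∀ l, MeasurableSet (A l)) (F : Finset (Finset (Fin n))) :
    (P {ω | Finset.univ.filter (fun l => ω ∈ A l) ∈ F}).toReal = ∑ s ∈ F, iblp P A s := by
  have hun : {ω | Finset.univ.filter (fun l => ω ∈ A l) ∈ F}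
      = ⋃ s ∈ F, {ω | Finset.univ.filter (fun l => ω ∈ A l) = s} := by
    ext ω; simp
  have hd : (↑F : Set (Finset (Fin n))).PairwiseDisjoint
      (fun s => {ω | Finset.univ.filter (fun l => ω ∈ A l) = s}) := by
    intro s _ t _ hst
    refine Set.disjoint_left.mpr fun ω hω1 hω2 => hst ?_
    simp only [Set.mem_setOf_eq] at hω1 hω2
    rw [← hω1, hω2]
  rw [hun, measure_biUnion_finset hd (fun s _ => iblBmeas A hA s),
    ENNReal.toReal_sum (fun s _ => measure_ne_top P _)]
  rfl

lemma iblT (hA : ∀ l, MeasurableSet (A l)) (T : Finset (Fin n)) :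
    (P (⋂ l ∈ T, A l)).toReal
      = ∑ s ∈ Finset.univ.filter (fun s : Finset (Fin n) => T ⊆ s), iblp P A s := by
  rw [← iblmeasF P A hA]
  have hs : (⋂ l ∈ T, A l)
      = {ω | Finset.univ.filter (fun l => ω ∈ A l) ∈ Finset.univ.filter (fun s : Finset (Fin n) => T ⊆ s)} := by
    ext ω
    simp [Finset.subset_iff, Set.mem_iInter]
  rw [hs]

lemma iblL (hA : ∀ l, MeasurableSet (A l)) (r : ℕ) :
    (P {ω | r ≤ (Finset.univ.filter (fun l => ω ∈ A l)).card}).toReal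
      = ∑ s ∈ Finset.univ.filter (fun s : Finset (Fin n) => r ≤ s.card), iblp P A s := by
  rw [← iblmeasF P A hA]
  have hs : {ω | r ≤ (Finset.univ.filter (fun l => ω ∈ A l)).card}
      = {ω | Finset.univ.filter (fun l => ω ∈ A l) ∈ Finset.univ.filter (fun s : Finset (Fin n) => r ≤ s.card)} := by
    ext ω
    simp
  rw [hs]

lemma iblswap (hA : ∀ l, MeasurableSet (A l)) (j : ℕ) :
    ∑ T ∈ Finset.powersetCard j (Finset.univ : Finset (Fin n)),
        (P (⋂ l ∈ T, A l)).toReal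
      = ∑ s : Finset (Fin n), (s.card.choose j : ℝ) * iblp P A s := by
  calc ∑ T ∈ Finset.powersetCard j (Finset.univ : Finset (Fin n)), (P (⋂ l ∈ T, A l)).toReal
      = ∑ T ∈ Finset.powersetCard j (Finset.univ : Finset (Fin n)),
          ∑ s : Finset (Fin n), if T ⊆ s then iblp P A s else 0 := by
        refine Finset.sum_congr rfl fun T _ => ?_
        rw [iblT P A hA T, Finset.sum_filter]
    _ = ∑ s : Finset (Fin n), ∑ T ∈ Finset.powersetCard j (Finset.univ : Finset (Fin n)),
          if T ⊆ s then iblp P A s else 0 := Finset.sum_comm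
    _ = ∑ s : Finset (Fin n), (s.card.choose j : ℝ) * iblp P A s := by
        refine Finset.sum_congr rfl fun s _ => ?_
        rw [← Finset.sum_filter]
        have hfe : (Finset.powersetCard j (Finset.univ : Finset (Fin n))).filter
            (fun T => T ⊆ s) = Finset.powersetCard j s := by
          ext T
          simp only [Finset.mem_filter, Finset.mem_powersetCard, Finset.subset_univ, true_and]
          tauto
        rw [hfe, Finset.sum_const, Finset.card_powersetCard, nsmul_eq_mul]

end

/-- improved Bonferroni lower bound.  For `1 ≤ r ≤ k ≤ n-1` with
`r + k` odd,
`P(X ≥ r) ≥ ∑_{j=r}^{k} (-1)^{r+j} C(j-1,r-1) S_j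
            + (∑_{i=1}^{r} C(k-i,r-i) C(k+1,i)/C(n,i)) · S_{k+1}`. -/
theorem improved_bonferroni_lower_bound
    {Ω : Type*} [MeasurableSpace Ω] (P : Measure Ω) [IsProbabilityMeasure P]
    (n : ℕ) (A : Fin n → Set Ω) (hA : ∀ l, MeasurableSet (A l))
    (k r : ℕ) (hr1 : 1 ≤ r) (hrk : r ≤ k) (hkn : k + 1 ≤ n) (hodd : Odd (r + k)) :
    (P {ω | r ≤ (Finset.univ.filter (fun l => ω ∈ A l)).card}).toReal
      ≥ (∑ j ∈ Finset.Icc r k,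
          (-1 : ℝ) ^ (r + j) * ((j - 1).choose (r - 1)) *
            ∑ T ∈ Finset.powersetCard j (Finset.univ : Finset (Fin n)),
              (P (⋂ l ∈ T, A l)).toReal)
        + (∑ i ∈ Finset.Icc 1 r,
              ((k - i).choose (r - i) : ℝ) * ((k + 1).choose i : ℝ) / (n.choose i : ℝ)) *
            ∑ T ∈ Finset.powersetCard (k + 1) (Finset.univ : Finset (Fin n)),
              (P (⋂ l ∈ T, A l)).toReal := by
  rw [ge_iff_le, iblL P A hA r]
  set c : ℝ := ∑ i ∈ Finset.Icc 1 r,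
      ((k - i).choose (r - i) : ℝ) * ((k + 1).choose i : ℝ) / (n.choose i : ℝ) with hc
  have e1 : (∑ j ∈ Finset.Icc r k,
        (-1 : ℝ) ^ (r + j) * ((j - 1).choose (r - 1)) *
          ∑ T ∈ Finset.powersetCard j (Finset.univ : Finset (Fin n)),
            (P (⋂ l ∈ T, A l)).toReal)
      = ∑ s : Finset (Fin n),
          (∑ j ∈ Finset.Icc r k,
            (-1 : ℝ) ^ (r + j) * ((j - 1).choose (r - 1)) * (s.card.choose j : ℝ))
          * iblp P A s := by
    calc (∑ j ∈ Finset.Icc r k,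
        (-1 : ℝ) ^ (r + j) * ((j - 1).choose (r - 1)) *
          ∑ T ∈ Finset.powersetCard j (Finset.univ : Finset (Fin n)),
            (P (⋂ l ∈ T, A l)).toReal)
        = ∑ j ∈ Finset.Icc r k, ∑ s : Finset (Fin n),
            (-1 : ℝ) ^ (r + j) * ((j - 1).choose (r - 1)) *
              ((s.card.choose j : ℝ) * iblp P A s) := by
          refine Finset.sum_congr rfl fun j _ => ?_
          rw [iblswap P A hA j, Finset.mul_sum]
      _ = ∑ s : Finset (Fin n), ∑ j ∈ Finset.Icc r k,
            (-1 : ℝ) ^ (r + j) * ((j - 1).choose (r - 1)) *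
              ((s.card.choose j : ℝ) * iblp P A s) := Finset.sum_comm
      _ = ∑ s : Finset (Fin n),
          (∑ j ∈ Finset.Icc r k,
            (-1 : ℝ) ^ (r + j) * ((j - 1).choose (r - 1)) * (s.card.choose j : ℝ))
          * iblp P A s := by
          refine Finset.sum_congr rfl fun s _ => ?_
          rw [Finset.sum_mul]
          exact Finset.sum_congr rfl fun j _ => by ring
  have e2 : c * (∑ T ∈ Finset.powersetCard (k + 1) (Finset.univ : Finset (Fin n)),
        (P (⋂ l ∈ T, A l)).toReal)
      = ∑ s : Finset (Fin n), (c * (s.card.choose (k+1) : ℝ)) * iblp P A s := by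
    rw [iblswap P A hA (k+1), Finset.mul_sum]
    exact Finset.sum_congr rfl fun s _ => by ring
  rw [e1, e2, ← Finset.sum_add_distrib, Finset.sum_filter]
  refine Finset.sum_le_sum fun s _ => ?_
  have hcard : s.card ≤ n := le_trans (Finset.card_le_univ s) (by simp)
  have hpt := ibl_pointwise n r k s.card hr1 hrk hkn hcard hodd
  have hp0 : (0:ℝ) ≤ iblp P A s := ENNReal.toReal_nonneg
  rw [← add_mul]
  refine le_trans (mul_le_mul_of_nonneg_right hpt hp0) ?_
  by_cases hrc : r ≤ s.card <;> simp [hrc]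
end

section
/- For all integers k, r with 1 ≤ r ≤ k ≤ n-1 and r + k even, P(X ≥ r) ≤ Σ_{j=r}^{k} (-1)^{r+j} C(j-1, r-1) S_j − (Σ_{i=1}^{r} C(k-i, r-i) · C(k+1, i)/C(n, i)) · S_{k+1}. -/
open MeasureTheory Finset
open scoped Classical

lemma lemL1 : ∀ r, 1 ≤ r → ∀ m : ℕ,
    m.choose r = (if r ≤ m then 1 else 0) + ∑ t ∈ range r, (m - 1 - t).choose (r - t) := by
  intro r hr
  induction r, hr using Nat.le_induction with
  | base =>
    intro m
    cases m with
    | zero => simp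
    | succ m' => simp [Nat.choose_one_right]; omega
  | succ r hr ih =>
    intro m
    cases m with
    | zero =>
      have h0 : ∀ t ∈ range (r+1), (0 - 1 - t).choose (r + 1 - t) = 0 := by
        intro t ht
        rw [mem_range] at ht
        exact Nat.choose_eq_zero_of_lt (by omega)
      rw [Finset.sum_congr rfl h0]
      simp
    | succ m' =>
      rw [Finset.sum_range_succ']
      have h1 : ∀ t ∈ range r,
          (m' + 1 - 1 - (t + 1)).choose (r + 1 - (t + 1)) = (m' - 1 - t).choose (r - t) := by
        intro t ht
        congr 1 <;> omega
      rw [Finset.sum_congr rfl h1]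
      have h2 : (m' + 1 - 1 - 0).choose (r + 1 - 0) = m'.choose (r+1) := by norm_num
      rw [h2, ← Nat.add_assoc]
      have h3 : (if r + 1 ≤ m' + 1 then 1 else 0) = (if r ≤ m' then 1 else 0) := by
        by_cases h : r ≤ m' <;> simp [h]
      rw [h3, ← ih m', Nat.choose_succ_succ m' r]

lemma lemL2 : ∀ r, 1 ≤ r → ∀ k m : ℕ, r ≤ k →
    ∑ t ∈ range r, ((k - t).choose (r - 1 - t) * (m - 1 - t).choose (k + 1 - t)
        + (k - 1 - t).choose (r - 1 - t) * (m - 1 - t).choose (k - t))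
      = k.choose (r - 1) * m.choose (k + 1) := by
  intro r hr
  induction r, hr using Nat.le_induction with
  | base =>
    intro k m hk
    cases m with
    | zero =>
      have z1 : ((0:ℕ) - 1 - 0) = 0 := rfl
      simp only [range_one, sum_singleton, Nat.sub_zero, Nat.sub_self, z1,
        Nat.choose_zero_right, one_mul]
      rw [Nat.choose_eq_zero_of_lt (show (0:ℕ) < k + 1 by omega),
        Nat.choose_eq_zero_of_lt (show (0:ℕ) < k by omega)]
    | succ m' =>
      simp only [range_one, sum_singleton, Nat.sub_zero, Nat.sub_self,
        Nat.choose_zero_right, one_mul, Nat.add_sub_cancel]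
      rw [Nat.choose_succ_succ m' k]
      simp only [Nat.succ_eq_add_one]
      omega
  | succ r hr ih =>
    intro k m hk
    cases m with
    | zero =>
      have h0 : ∀ t ∈ range (r+1),
          (k - t).choose (r + 1 - 1 - t) * (0 - 1 - t).choose (k + 1 - t)
            + (k - 1 - t).choose (r + 1 - 1 - t) * (0 - 1 - t).choose (k - t) = 0 := by
        intro t ht
        rw [mem_range] at ht
        rw [Nat.choose_eq_zero_of_lt (show (0:ℕ) - 1 - t < k + 1 - t by omega),
          Nat.choose_eq_zero_of_lt (show (0:ℕ) - 1 - t < k - t by omega)]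
        simp
      rw [Finset.sum_congr rfl h0, Nat.choose_eq_zero_of_lt (show (0:ℕ) < k + 1 by omega)]
      simp
    | succ m' =>
      rw [Finset.sum_range_succ']
      have h1 : ∀ t ∈ range r,
          (k - (t+1)).choose (r + 1 - 1 - (t+1)) * (m' + 1 - 1 - (t+1)).choose (k + 1 - (t+1))
            + (k - 1 - (t+1)).choose (r + 1 - 1 - (t+1)) * (m' + 1 - 1 - (t+1)).choose (k - (t+1))
          = ((k-1) - t).choose (r - 1 - t) * (m' - 1 - t).choose ((k-1) + 1 - t)
            + ((k-1) - 1 - t).choose (r - 1 - t) * (m' - 1 - t).choose ((k-1) - t) := by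
        intro t ht
        rw [mem_range] at ht
        have e1 : k - (t+1) = (k-1) - t := by omega
        have e2 : r + 1 - 1 - (t+1) = r - 1 - t := by omega
        have e3 : m' + 1 - 1 - (t+1) = m' - 1 - t := by omega
        have e4 : k + 1 - (t+1) = (k-1) + 1 - t := by omega
        have e5 : k - 1 - (t+1) = (k-1) - 1 - t := by omega
        rw [e1, e2, e3, e4, e5]
      rw [Finset.sum_congr rfl h1, ih (k-1) m' (by omega)]
      simp only [Nat.sub_zero, Nat.add_sub_cancel]
      have hk1 : (k - 1) + 1 = k := by omega
      rw [hk1]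
      have hp1 : (k-1).choose (r-1) + (k-1).choose r = k.choose r := by
        have hps := Nat.choose_succ_succ (k-1) (r-1)
        have e1 : (k-1)+1 = k := by omega
        have e2 : (r-1)+1 = r := by omega
        simp only [Nat.succ_eq_add_one] at hps
        rw [e1, e2] at hps
        omega
      have hp2 : m'.choose k + m'.choose (k+1) = (m'+1).choose (k+1) :=
        (Nat.choose_succ_succ m' k).symm
      zify at hp1 hp2 ⊢
      linear_combination (m'.choose k : ℤ) * hp1 + (k.choose r : ℤ) * hp2

lemma lemL3 (r : ℕ) (hr : 1 ≤ r) : ∀ k, r ≤ k → ∀ m : ℕ,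
    ∑ j ∈ Icc r k, (-1 : ℤ)^(r+j) * ((j-1).choose (r-1) : ℤ) * (m.choose j : ℤ)
    = (if r ≤ m then 1 else 0)
      + (-1 : ℤ)^(r+k) * ∑ t ∈ range r,
          (((k - 1 - t).choose (r - 1 - t) : ℤ) * ((m - 1 - t).choose (k - t) : ℤ)) := by
  intro k hk
  induction k, hk using Nat.le_induction with
  | base =>
    intro m
    rw [Finset.Icc_self, Finset.sum_singleton]
    have hsgn : (-1 : ℤ)^(r+r) = 1 := Even.neg_one_pow ⟨r, rfl⟩
    rw [hsgn, Nat.choose_self]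
    have h := congrArg (Nat.cast : ℕ → ℤ) (lemL1 r hr m)
    push_cast at h
    rw [h]
    have hs : ∀ t ∈ range r,
        ((r - 1 - t).choose (r - 1 - t) : ℤ) * ((m - 1 - t).choose (r - t) : ℤ)
          = ((m - 1 - t).choose (r - t) : ℤ) := by
      intro t ht
      rw [Nat.choose_self]
      push_cast
      ring
    rw [Finset.sum_congr rfl hs]
    split_ifs <;> push_cast <;> ring
  | succ k hk ih =>
    intro m
    rw [Finset.sum_Icc_succ_top (by omega : r ≤ k + 1), ih m]
    simp only [Nat.add_sub_cancel]
    have hsgn : (-1 : ℤ)^(r+(k+1)) = -(-1 : ℤ)^(r+k) := by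
      rw [← add_assoc, pow_succ]; ring
    have h := congrArg (Nat.cast : ℕ → ℤ) (lemL2 r hr k m (by omega))
    push_cast at h
    have hW : (∑ t ∈ range r,
          ((k - t).choose (r - 1 - t) : ℤ) * ((m - 1 - t).choose (k + 1 - t) : ℤ))
        + ∑ t ∈ range r,
          (((k - 1 - t).choose (r - 1 - t) : ℤ) * ((m - 1 - t).choose (k - t) : ℤ))
      = (k.choose (r-1) : ℤ) * (m.choose (k+1) : ℤ) := by
      rw [← Finset.sum_add_distrib]
      exact h
    rw [hsgn]
    linear_combination (-1 : ℤ)^(r+k) * hW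

lemma lemL4 (n k r m : ℕ) (hr : 1 ≤ r) (hrk : r ≤ k) (hkn : k + 1 ≤ n) (hm : m ≤ n)
    (heven : Even (r + k)) :
    (if r ≤ m then (1:ℝ) else 0)
      + (∑ i ∈ Icc 1 r, ((k-i).choose (r-i) : ℝ) * ((k+1).choose i : ℝ) / (n.choose i : ℝ))
          * (m.choose (k+1) : ℝ)
    ≤ ∑ j ∈ Icc r k, (-1 : ℝ)^(r+j) * ((j-1).choose (r-1) : ℝ) * (m.choose j : ℝ) := by
  have h3 := congrArg (Int.cast : ℤ → ℝ) (lemL3 r hr k hrk m)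
  push_cast at h3
  rw [h3]
  have hsgn : (-1 : ℝ)^(r+k) = 1 := Even.neg_one_pow heven
  rw [hsgn, one_mul]
  apply add_le_add_right
  -- convert Icc 1 r to range r
  rw [show Finset.Icc 1 r = Finset.Ico 1 (r+1) by rw [Finset.Ico_add_one_right_eq_Icc],
    Finset.sum_Ico_eq_sum_range]
  simp only [Nat.add_sub_cancel]
  rw [Finset.sum_mul]
  apply Finset.sum_le_sum
  intro t ht
  rw [mem_range] at ht
  have e1 : k - (1 + t) = k - 1 - t := by omega
  have e2 : r - (1 + t) = r - 1 - t := by omega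
  rw [e1, e2]
  rcases le_or_gt (k+1) m with hmk | hmk
  · -- m ≥ k+1
    have hid := Nat.choose_mul (n := m) (k := k+1) (s := 1+t) (by omega)
    have hle : (m.choose (1+t) : ℝ) ≤ (n.choose (1+t) : ℝ) := by
      exact_mod_cast Nat.choose_le_choose _ hm
    have hpos : (0:ℝ) < (n.choose (1+t) : ℝ) := by
      exact_mod_cast Nat.choose_pos (by omega : 1 + t ≤ n)
    have hidR : ((k+1).choose (1+t) : ℝ) * (m.choose (k+1) : ℝ)
        = (m.choose (1+t) : ℝ) * ((m - (1+t)).choose (k + 1 - (1+t)) : ℝ) := by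
      have := congrArg (Nat.cast : ℕ → ℝ) hid
      push_cast at this
      linarith [this]
    have e3 : m - (1+t) = m - 1 - t := by omega
    have e4 : k + 1 - (1+t) = k - t := by omega
    rw [e3, e4] at hidR
    have hcnonneg : (0:ℝ) ≤ ((k-1-t).choose (r-1-t) : ℝ) := by positivity
    have key : ((k+1).choose (1+t) : ℝ) / (n.choose (1+t) : ℝ) * (m.choose (k+1) : ℝ)
        ≤ ((m - 1 - t).choose (k - t) : ℝ) := by
      rw [div_mul_eq_mul_div, hidR, div_le_iff₀ hpos]
      have hc2 : (0:ℝ) ≤ ((m - 1 - t).choose (k - t) : ℝ) := by positivity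
      nlinarith [hle, hc2]
    calc ((k-1-t).choose (r-1-t) : ℝ) * ((k+1).choose (1+t) : ℝ) / (n.choose (1+t) : ℝ)
          * (m.choose (k+1) : ℝ)
        = ((k-1-t).choose (r-1-t) : ℝ)
            * (((k+1).choose (1+t) : ℝ) / (n.choose (1+t) : ℝ) * (m.choose (k+1) : ℝ)) := by
          ring
      _ ≤ ((k-1-t).choose (r-1-t) : ℝ) * ((m - 1 - t).choose (k - t) : ℝ) :=
          mul_le_mul_of_nonneg_left key hcnonneg
  · -- m < k+1 : LHS term is 0
    have hz : m.choose (k+1) = 0 := Nat.choose_eq_zero_of_lt hmk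
    rw [hz]
    push_cast
    rw [mul_zero]
    positivity

lemma measB_measurable {Ω : Type*} [MeasurableSpace Ω]
    (n : ℕ) (A : Fin n → Set Ω) (hA : ∀ l, MeasurableSet (A l)) (S : Finset (Fin n)) :
    MeasurableSet {ω | Finset.univ.filter (fun l => ω ∈ A l) = S} := by
  have heq : {ω | Finset.univ.filter (fun l => ω ∈ A l) = S}
      = ⋂ l : Fin n, (if l ∈ S then A l else (A l)ᶜ) := by
    ext ω
    simp only [Set.mem_setOf_eq, Set.mem_iInter, Finset.ext_iff, mem_filter, mem_univ, true_and]
    constructor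
    · intro h l
      by_cases hl : l ∈ S
      · simpa [hl] using (h l).mpr hl
      · simp only [hl, if_false, Set.mem_compl_iff]
        intro hAl
        exact hl ((h l).mp hAl)
    · intro h l
      specialize h l
      by_cases hl : l ∈ S
      · simp only [hl, if_true] at h
        tauto
      · simp only [hl, if_false, Set.mem_compl_iff] at h
        tauto
  rw [heq]
  exact MeasurableSet.iInter fun l => by
    by_cases hl : l ∈ S
    · simpa [hl] using hA l
    · simpa [hl] using (hA l).compl

lemma measure_decomp {Ω : Type*} [MeasurableSpace Ω] (P : Measure Ω) [IsProbabilityMeasure P]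
    (n : ℕ) (A : Fin n → Set Ω) (hA : ∀ l, MeasurableSet (A l))
    (p : Finset (Fin n) → Prop) :
    (P {ω | p (Finset.univ.filter (fun l => ω ∈ A l))}).toReal
      = ∑ S ∈ (Finset.univ : Finset (Finset (Fin n))).filter p,
          (P {ω | Finset.univ.filter (fun l => ω ∈ A l) = S}).toReal := by
  have hset : {ω | p (Finset.univ.filter (fun l => ω ∈ A l))}
      = ⋃ S ∈ (Finset.univ : Finset (Finset (Fin n))).filter p,
          {ω | Finset.univ.filter (fun l => ω ∈ A l) = S} := by
    ext ω
    simp only [Set.mem_setOf_eq, Set.mem_iUnion, mem_filter, mem_univ, true_and]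
    constructor
    · intro h
      exact ⟨_, h, rfl⟩
    · rintro ⟨S, hS, hEq⟩
      rw [hEq]
      exact hS
  have hdisj : Set.PairwiseDisjoint
      (↑((Finset.univ : Finset (Finset (Fin n))).filter p))
      (fun S => {ω | Finset.univ.filter (fun l => ω ∈ A l) = S}) := by
    intro S _ S' _ hne
    apply Set.disjoint_left.mpr
    intro ω hS hS'
    exact hne (hS.symm.trans hS')
  rw [hset, measure_biUnion_finset hdisj (fun S _ => measB_measurable n A hA S)]
  exact ENNReal.toReal_sum fun S _ => measure_ne_top P _

/-- improved Bonferroni upper bound. -/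
theorem improved_bonferroni_upper_bound
    {Ω : Type*} [MeasurableSpace Ω] (P : Measure Ω) [IsProbabilityMeasure P]
    (n : ℕ) (A : Fin n → Set Ω) (hA : ∀ l, MeasurableSet (A l))
    (k r : ℕ) (hr1 : 1 ≤ r) (hrk : r ≤ k) (hkn : k + 1 ≤ n) (heven : Even (r + k)) :
    (P {ω | r ≤ (Finset.univ.filter (fun l => ω ∈ A l)).card}).toReal
      ≤ (∑ j ∈ Finset.Icc r k,
          (-1 : ℝ) ^ (r + j) * ((j - 1).choose (r - 1)) *
            ∑ T ∈ Finset.powersetCard j (Finset.univ : Finset (Fin n)),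
              (P (⋂ l ∈ T, A l)).toReal)
        - (∑ i ∈ Finset.Icc 1 r,
              ((k - i).choose (r - i) : ℝ) * ((k + 1).choose i : ℝ) / (n.choose i : ℝ)) *
            ∑ T ∈ Finset.powersetCard (k + 1) (Finset.univ : Finset (Fin n)),
              (P (⋂ l ∈ T, A l)).toReal := by
  set q : Finset (Fin n) → ℝ :=
    fun S => (P {ω | Finset.univ.filter (fun l => ω ∈ A l) = S}).toReal with hq
  have hq0 : ∀ S, 0 ≤ q S := fun S => ENNReal.toReal_nonneg
  -- LHS decomposition
  have hLHS : (P {ω | r ≤ (Finset.univ.filter (fun l => ω ∈ A l)).card}).toReal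
      = ∑ S ∈ (Finset.univ : Finset (Finset (Fin n))),
          (if r ≤ S.card then (1:ℝ) else 0) * q S := by
    rw [measure_decomp P n A hA (fun S => r ≤ S.card), Finset.sum_filter]
    apply Finset.sum_congr rfl
    intro S _
    split_ifs <;> simp [hq]
  -- S_j decomposition
  have hSj : ∀ j : ℕ,
      ∑ T ∈ Finset.powersetCard j (Finset.univ : Finset (Fin n)),
          (P (⋂ l ∈ T, A l)).toReal
        = ∑ S ∈ (Finset.univ : Finset (Finset (Fin n))), (S.card.choose j : ℝ) * q S := by
    intro j
    have hT : ∀ T : Finset (Fin n),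
        (P (⋂ l ∈ T, A l)).toReal
          = ∑ S ∈ (Finset.univ : Finset (Finset (Fin n))),
              (if T ⊆ S then (1:ℝ) else 0) * q S := by
      intro T
      have hset : (⋂ l ∈ T, A l) = {ω | T ⊆ Finset.univ.filter (fun l => ω ∈ A l)} := by
        ext ω
        simp [Set.mem_iInter, Finset.subset_iff]
      rw [hset, measure_decomp P n A hA (fun S => T ⊆ S), Finset.sum_filter]
      apply Finset.sum_congr rfl
      intro S _
      split_ifs <;> simp [hq]
    calc ∑ T ∈ Finset.powersetCard j (Finset.univ : Finset (Fin n)),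
            (P (⋂ l ∈ T, A l)).toReal
        = ∑ T ∈ Finset.powersetCard j (Finset.univ : Finset (Fin n)),
            ∑ S ∈ (Finset.univ : Finset (Finset (Fin n))),
              (if T ⊆ S then (1:ℝ) else 0) * q S := by
          exact Finset.sum_congr rfl fun T _ => hT T
      _ = ∑ S ∈ (Finset.univ : Finset (Finset (Fin n))),
            ∑ T ∈ Finset.powersetCard j (Finset.univ : Finset (Fin n)),
              (if T ⊆ S then (1:ℝ) else 0) * q S := Finset.sum_comm
      _ = ∑ S ∈ (Finset.univ : Finset (Finset (Fin n))), (S.card.choose j : ℝ) * q S := by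
          apply Finset.sum_congr rfl
          intro S _
          simp only [ite_mul, one_mul, zero_mul]
          rw [← Finset.sum_filter]
          have hfe : (Finset.powersetCard j (Finset.univ : Finset (Fin n))).filter
              (fun T => T ⊆ S) = Finset.powersetCard j S := by
            ext T
            simp only [mem_filter, mem_powersetCard, subset_univ, true_and]
            tauto
          rw [hfe, Finset.sum_const, Finset.card_powersetCard, nsmul_eq_mul]
  rw [hLHS]
  have hRW : ∀ j : ℕ, ∀ c : ℝ,
      c * (∑ T ∈ Finset.powersetCard j (Finset.univ : Finset (Fin n)),
          (P (⋂ l ∈ T, A l)).toReal)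
        = ∑ S ∈ (Finset.univ : Finset (Finset (Fin n))), c * ((S.card.choose j : ℝ) * q S) := by
    intro j c
    rw [hSj j, Finset.mul_sum]
  calc ∑ S ∈ (Finset.univ : Finset (Finset (Fin n))),
          (if r ≤ S.card then (1:ℝ) else 0) * q S
      ≤ ∑ S ∈ (Finset.univ : Finset (Finset (Fin n))),
          ((∑ j ∈ Finset.Icc r k,
              (-1 : ℝ) ^ (r + j) * ((j - 1).choose (r - 1) : ℝ) * (S.card.choose j : ℝ))
            - (∑ i ∈ Finset.Icc 1 r,
                ((k - i).choose (r - i) : ℝ) * ((k + 1).choose i : ℝ) / (n.choose i : ℝ))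
                * (S.card.choose (k+1) : ℝ)) * q S := by
        apply Finset.sum_le_sum
        intro S _
        have hm : S.card ≤ n := by
          have := Finset.card_le_univ S
          simpa using this
        have h4 := lemL4 n k r S.card hr1 hrk hkn hm heven
        have := mul_le_mul_of_nonneg_right h4 (hq0 S)
        nlinarith [this]
    _ = (∑ j ∈ Finset.Icc r k,
          (-1 : ℝ) ^ (r + j) * ((j - 1).choose (r - 1)) *
            ∑ T ∈ Finset.powersetCard j (Finset.univ : Finset (Fin n)),
              (P (⋂ l ∈ T, A l)).toReal)
        - (∑ i ∈ Finset.Icc 1 r,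
              ((k - i).choose (r - i) : ℝ) * ((k + 1).choose i : ℝ) / (n.choose i : ℝ)) *
            ∑ T ∈ Finset.powersetCard (k + 1) (Finset.univ : Finset (Fin n)),
              (P (⋂ l ∈ T, A l)).toReal := by
        rw [hRW (k+1)]
        have : ∀ j ∈ Finset.Icc r k,
            (-1 : ℝ) ^ (r + j) * ((j - 1).choose (r - 1) : ℝ) *
              ∑ T ∈ Finset.powersetCard j (Finset.univ : Finset (Fin n)),
                (P (⋂ l ∈ T, A l)).toReal
            = ∑ S ∈ (Finset.univ : Finset (Finset (Fin n))),
                (-1 : ℝ) ^ (r + j) * ((j - 1).choose (r - 1) : ℝ)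
                  * ((S.card.choose j : ℝ) * q S) := by
          intro j _
          exact hRW j _
        rw [Finset.sum_congr rfl this, Finset.sum_comm, ← Finset.sum_sub_distrib]
        apply Finset.sum_congr rfl
        intro S _
        rw [sub_mul, Finset.sum_mul]
        congr 1
        · apply Finset.sum_congr rfl
          intro j _
          ring
        · exact mul_assoc _ _ _
end

section
/- Let 1 ≤ r ≤ k ≤ n-1 with r + k odd, and let α be a real number such that 1 ≥ Σ_{j=r}^{k} (-1)^{r+j} C(j-1, r-1) C(n, j) + α C(n, k+1) (i.e., the lower bound P(X ≥ r) ≥ Σ_{j=r}^{k} (-1)^{r+j} C(j-1, r-1) S_j + α S_{k+1} holds in the instance where every event A_i equals the whole sample space, so that S_j = C(n, j) and P(X ≥ r) = 1). Then α ≤ Σ_{i=1}^{r} C(k-i, r-i) C(k+1, i)/C(n, i). Hence α = Σ_{i=1}^{r} C(k-i, r-i) C(k+1, i)/C(n, i) is the most stringent valid coefficient among all bounds of this form. -/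
open Finset

private lemma base_sum (n r : ℕ) (hr : 1 ≤ r) (hrn : r + 1 ≤ n) :
    (∑ i ∈ Icc 1 r, ((n - i).choose (r + 1 - i) : ℝ)) = (n.choose r : ℝ) - 1 := by
  have hre : ∑ i ∈ Icc 1 r, ((n - i).choose (r + 1 - i) : ℝ)
      = ∑ t ∈ range r, ((n - (1 + t)).choose (r + 1 - (1 + t)) : ℝ) := by
    rw [← Finset.Ico_add_one_right_eq_Icc, Finset.sum_Ico_eq_sum_range]
    norm_num
  rw [hre]
  have key : ∀ t ∈ range r, ((n - (1 + t)).choose (r + 1 - (1 + t)) : ℝ)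
      = ((n - t).choose (r - t) : ℝ) - ((n - (t+1)).choose (r - (t+1)) : ℝ) := by
    intro t ht
    rw [mem_range] at ht
    have e1 : n - t = (n - (t+1)) + 1 := by omega
    have e2 : r - t = (r - (t+1)) + 1 := by omega
    have e3 : n - (1 + t) = n - (t+1) := by omega
    have e4 : r + 1 - (1 + t) = (r - (t+1)) + 1 := by omega
    rw [e1, e2, e3, e4, Nat.choose_succ_succ]
    push_cast
    ring
  rw [Finset.sum_congr rfl key, Finset.sum_range_sub' (fun t => ((n - t).choose (r - t) : ℝ))]
  have : n - r ≥ 0 := by omega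
  simp [Nat.sub_self]

private lemma h2 (n k r : ℕ) (hr : 1 ≤ r) (hrk : r ≤ k) (hkn : k + 1 ≤ n) :
    ((k.choose (r-1) : ℝ)) * (n.choose (k+1) : ℝ)
      = (∑ i ∈ Icc 1 r, ((k-i).choose (r-i) : ℝ) * ((n-i).choose (k+1-i) : ℝ))
      + (∑ i ∈ Icc 1 r, ((k+1-i).choose (r-i) : ℝ) * ((n-i).choose (k+2-i) : ℝ)) := by
  set f : ℕ → ℝ := fun t => if t < r then ((k-t).choose (r-1-t) : ℝ) * ((n-t).choose (k+1-t) : ℝ) else 0 with hf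
  have hsum : (∑ i ∈ Icc 1 r, (((k-i).choose (r-i) : ℝ) * ((n-i).choose (k+1-i) : ℝ)
        + ((k+1-i).choose (r-i) : ℝ) * ((n-i).choose (k+2-i) : ℝ)))
      = ∑ t ∈ range r, (f t - f (t+1)) := by
    rw [← Finset.Ico_add_one_right_eq_Icc, Finset.sum_Ico_eq_sum_range]
    apply Finset.sum_congr (by norm_num)
    intro t ht
    rw [mem_range] at ht
    -- i = 1 + t
    have hft : f t = ((k+1-(1+t)).choose (r-(1+t)) : ℝ)
        * (((n-(1+t)).choose (k+1-(1+t)) : ℝ) + ((n-(1+t)).choose (k+2-(1+t)) : ℝ)) := by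
      have e1 : k - t = (k - (1+t)) + 1 := by omega
      have e2 : r - 1 - t = r - (1+t) := by omega
      have e3 : n - t = (n - (1+t)) + 1 := by omega
      have e4 : k + 1 - t = (k + 1 - (1+t)) + 1 := by omega
      have e5 : k + 1 - (1+t) + 1 = k + 2 - (1+t) := by omega
      simp only [hf, if_pos ht]
      rw [e3, e4, Nat.choose_succ_succ, e1, e2]
      have e6 : (k - (1+t)) + 1 = k + 1 - (1+t) := by omega
      simp only [Nat.succ_eq_add_one]
      rw [e6, e5]
      push_cast
      ring
    rcases lt_or_ge (t+1) r with hlt | hge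
    · have hft1 : f (t+1) = ((k-(1+t)).choose (r-1-(1+t)) : ℝ) * ((n-(1+t)).choose (k+1-(1+t)) : ℝ) := by
        simp only [hf, if_pos hlt]
        norm_num [Nat.add_comm]
      have hp : ((k+1-(1+t)).choose (r-(1+t)) : ℝ)
          = ((k-(1+t)).choose (r-1-(1+t)) : ℝ) + ((k-(1+t)).choose (r-(1+t)) : ℝ) := by
        have e1 : k + 1 - (1+t) = (k - (1+t)) + 1 := by omega
        have e2 : r - (1+t) = (r - 1 - (1+t)) + 1 := by omega
        rw [e1, e2, Nat.choose_succ_succ]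
        have e3 : r - 1 - (1 + t) + 1 = r - (1+t) := by omega
        simp only [Nat.succ_eq_add_one]
        rw [e3]
        push_cast
        ring
      rw [hft, hft1, hp]
      ring
    · have heq : t + 1 = r := by omega
      have hft1 : f (t+1) = 0 := by simp [hf, heq]
      have e1 : r - (1+t) = 0 := by omega
      have e2 : k - (1+t) = k - r := by omega
      rw [hft, hft1, e1, e2]
      simp
  have hstep : ∑ t ∈ range r, (f t - f (t+1)) = f 0 - f r :=
    Finset.sum_range_sub' f r
  have hf0 : f 0 = ((k.choose (r-1) : ℝ)) * (n.choose (k+1) : ℝ) := by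
    have h0r : 0 < r := hr
    simp only [hf, if_pos h0r, Nat.sub_zero]
  have hfr : f r = 0 := by simp [hf]
  rw [← Finset.sum_add_distrib, hsum, hstep, hf0, hfr, sub_zero]

private lemma keyG (n r : ℕ) (hr : 1 ≤ r) :
    ∀ k, r ≤ k → k + 1 ≤ n →
    (∑ j ∈ Icc r k, (-1 : ℝ) ^ (r + j) * ((j - 1).choose (r - 1) : ℝ) * (n.choose j : ℝ))
      + (-1 : ℝ) ^ (r + k + 1)
        * (∑ i ∈ Icc 1 r, ((k - i).choose (r - i) : ℝ) * ((n - i).choose (k + 1 - i) : ℝ)) = 1 := by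
  intro k hk
  induction k, hk using Nat.le_induction with
  | base =>
    intro hrn
    have hB : (∑ i ∈ Icc 1 r, ((r - i).choose (r - i) : ℝ) * ((n - i).choose (r + 1 - i) : ℝ))
        = (n.choose r : ℝ) - 1 := by
      rw [← base_sum n r hr hrn]
      apply Finset.sum_congr rfl
      intro i _
      simp [Nat.choose_self]
    rw [Finset.Icc_self, Finset.sum_singleton, hB]
    have : (-1 : ℝ) ^ (r + r) = 1 := by
      rw [← two_mul]; exact Even.neg_one_pow ⟨r, by ring⟩
    rw [pow_succ, this, Nat.choose_self]
    push_cast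
    ring
  | succ k hk ih =>
    intro hkn2
    have hkn : k + 1 ≤ n := by omega
    have ihh := ih hkn
    rw [Finset.sum_Icc_succ_top (by omega : r ≤ k + 1)]
    have hH2 := h2 n k r hr hk hkn
    have hsucc : ∀ i, k + 1 + 1 - i = k + 2 - i := fun i => by omega
    have hBr : (∑ i ∈ Icc 1 r, ((k + 1 - i).choose (r - i) : ℝ) * ((n - i).choose (k + 1 + 1 - i) : ℝ))
        = ∑ i ∈ Icc 1 r, ((k + 1 - i).choose (r - i) : ℝ) * ((n - i).choose (k + 2 - i) : ℝ) := by
      apply Finset.sum_congr rfl; intro i _; rw [hsucc i]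
    rw [hBr]
    have hjt : (k + 1 - 1).choose (r - 1) = k.choose (r-1) := by norm_num
    rw [hjt]
    have e0 : r + (k+1) = r + k + 1 := by omega
    rw [e0, pow_succ]
    linear_combination ihh + (-1:ℝ)^(r+k+1) * hH2

/-- for `1 ≤ r ≤ k ≤ n-1` with `r + k` odd, if the real number `α`
satisfies `1 ≥ ∑_{j=r}^{k} (-1)^{r+j} C(j-1, r-1) C(n, j) + α C(n, k+1)` (i.e. the
lower bound of the form `∑_{j=r}^{k} (-1)^{r+j} C(j-1,r-1) S_j + α S_{k+1}` is
valid when every event equals the whole sample space), then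
`α ≤ ∑_{i=1}^{r} C(k-i, r-i) C(k+1, i)/C(n, i)`; hence the latter is the most
stringent coefficient among all bounds of this form. -/
theorem most_stringent_coefficient (n k r : ℕ) (α : ℝ)
    (hr1 : 1 ≤ r) (hrk : r ≤ k) (hkn : k + 1 ≤ n) (hodd : Odd (r + k))
    (hα : 1 ≥ (∑ j ∈ Finset.Icc r k,
          (-1 : ℝ) ^ (r + j) * ((j - 1).choose (r - 1) : ℝ) * (n.choose j : ℝ))
        + α * (n.choose (k + 1) : ℝ)) :
    α ≤ ∑ i ∈ Finset.Icc 1 r,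
          ((k - i).choose (r - i) : ℝ) * ((k + 1).choose i : ℝ) / (n.choose i : ℝ) := by
  have hG := keyG n r hr1 k hrk hkn
  have hpow : (-1 : ℝ) ^ (r + k + 1) = 1 := Even.neg_one_pow hodd.add_one
  rw [hpow, one_mul] at hG
  have hc : (0 : ℝ) < (n.choose (k+1) : ℝ) := by exact_mod_cast Nat.choose_pos hkn
  have hB : α * (n.choose (k+1) : ℝ)
      ≤ ∑ i ∈ Icc 1 r, ((k-i).choose (r-i) : ℝ) * ((n-i).choose (k+1-i) : ℝ) := by
    linarith
  have hsum : (∑ i ∈ Finset.Icc 1 r,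
        ((k - i).choose (r - i) : ℝ) * ((k + 1).choose i : ℝ) / (n.choose i : ℝ))
          * (n.choose (k+1) : ℝ)
      = ∑ i ∈ Icc 1 r, ((k-i).choose (r-i) : ℝ) * ((n-i).choose (k+1-i) : ℝ) := by
    rw [Finset.sum_mul]
    apply Finset.sum_congr rfl
    intro i hi
    rw [Finset.mem_Icc] at hi
    have h1 : n.choose (k+1) * (k+1).choose i = n.choose i * (n-i).choose (k+1-i) :=
      Nat.choose_mul (by omega)
    have hni : ((n.choose i : ℝ)) ≠ 0 := by
      have : 0 < n.choose i := Nat.choose_pos (by omega)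
      positivity
    have h1' := congrArg (Nat.cast : ℕ → ℝ) h1
    push_cast at h1'
    field_simp
    linear_combination ((k-i).choose (r-i) : ℝ) * h1'
  rw [← hsum] at hB
  exact le_of_mul_le_mul_right hB hc
end

section
/- For all integers i, k with 1 ≤ i ≤ k and k+1 ≤ n, E[C(X-i, k+1-i)] = Σ_{1 ≤ r_1 < ⋯ < r_{k+1-i} ≤ n} P( ⋃_{(t_1, …, t_i) ∈ T(r_1, …, r_{k+1-i})} A_{r_1} ∩ ⋯ ∩ A_{r_{k+1-i}} ∩ A_{t_1} ∩ ⋯ ∩ A_{t_i} ), where T(r_1, …, r_{k+1-i}) = {(t_1, …, t_i) : r_{k+1-i} < t_1 < ⋯ < t_i ≤ n} and the union over an empty index set is the empty event. -/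
open MeasureTheory Finset
open scoped Classical

lemma cardAbove {α : Type*} [LinearOrder α] (S : Finset α) (i : ℕ) :
    (S.filter fun r => i ≤ (S.filter fun s => r < s).card).card = S.card - i := by
  classical
  induction i with
  | zero => simp
  | succ i ih =>
    set F := S.filter fun r => i ≤ (S.filter fun s => r < s).card with hF
    have hsub : (S.filter fun r => i + 1 ≤ (S.filter fun s => r < s).card) ⊆ F := by
      intro r hr
      rw [Finset.mem_filter] at hr ⊢
      exact ⟨hr.1, le_trans (Nat.le_succ i) hr.2⟩
    by_cases h : F.Nonempty
    · set r0 := F.max' h with hr0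
      have hr0F : r0 ∈ F := F.max'_mem h
      have hr0S : r0 ∈ S := (Finset.mem_filter.1 hr0F).1
      -- r0 has exactly i elements above it
      have hub : ¬ (i + 1 ≤ (S.filter fun s => r0 < s).card) := by
        intro hcon
        have hne : (S.filter fun s => r0 < s).Nonempty := by
          rw [← Finset.card_pos]; omega
        set s0 := (S.filter fun s => r0 < s).min' hne with hs0
        have hs0m : s0 ∈ S.filter fun s => r0 < s := Finset.min'_mem _ hne
        have hs0S : s0 ∈ S := (Finset.mem_filter.1 hs0m).1
        have hs0gt : r0 < s0 := (Finset.mem_filter.1 hs0m).2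
        -- s0 ∈ F
        have hsF : s0 ∈ F := by
          rw [hF, Finset.mem_filter]
          refine ⟨hs0S, ?_⟩
          have hss : (S.filter fun s => r0 < s).erase s0 ⊆ S.filter fun s => s0 < s := by
            intro x hx
            rw [Finset.mem_erase, Finset.mem_filter] at hx
            rw [Finset.mem_filter]
            refine ⟨hx.2.1, lt_of_le_of_ne (Finset.min'_le _ _ (Finset.mem_filter.2 hx.2)) (Ne.symm hx.1)⟩
          have := Finset.card_le_card hss
          rw [Finset.card_erase_of_mem hs0m] at this
          omega
        exact absurd (Finset.le_max' F s0 hsF) (not_le.2 hs0gt)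
      have heq : (S.filter fun r => i + 1 ≤ (S.filter fun s => r < s).card) = F.erase r0 := by
        apply Finset.Subset.antisymm
        · intro r hr
          rw [Finset.mem_erase]
          refine ⟨?_, hsub hr⟩
          rintro rfl
          exact hub (Finset.mem_filter.1 hr).2
        · intro r hr
          rw [Finset.mem_erase] at hr
          have hrF := hr.2
          have hrS : r ∈ S := (Finset.mem_filter.1 hrF).1
          have hrlt : r < r0 := lt_of_le_of_ne (Finset.le_max' F r hrF) hr.1
          rw [Finset.mem_filter]
          refine ⟨hrS, ?_⟩
          have hss : insert r0 (S.filter fun s => r0 < s) ⊆ S.filter fun s => r < s := by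
            intro x hx
            rw [Finset.mem_insert] at hx
            rw [Finset.mem_filter]
            rcases hx with rfl | hx
            · exact ⟨hr0S, hrlt⟩
            · rw [Finset.mem_filter] at hx
              exact ⟨hx.1, lt_trans hrlt hx.2⟩
          have hcard := Finset.card_le_card hss
          rw [Finset.card_insert_of_notMem (by simp)] at hcard
          have hi : i ≤ (S.filter fun s => r0 < s).card := (Finset.mem_filter.1 hr0F).2
          omega
      rw [heq, Finset.card_erase_of_mem hr0F, ih]
      have hpos : 0 < F.card := Finset.card_pos.2 h
      omega
    · rw [Finset.not_nonempty_iff_eq_empty] at h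
      have h2 : (S.filter fun r => i + 1 ≤ (S.filter fun s => r < s).card) = ∅ :=
        Finset.subset_empty.1 (h ▸ hsub)
      rw [h2]
      have : F.card = S.card - i := ih
      rw [h] at this
      simp at this ⊢
      omega

lemma cond_iff {α : Type*} [LinearOrder α] (S : Finset α) (i : ℕ) (R : Finset α)
    (hR : R.Nonempty) :
    (R ⊆ S ∧ i ≤ (S.filter fun s => ∀ r ∈ R, r < s).card) ↔
      R ⊆ S.filter fun r => i ≤ (S.filter fun s => r < s).card := by
  classical
  constructor
  · rintro ⟨hRS, hcard⟩ r hr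
    rw [Finset.mem_filter]
    refine ⟨hRS hr, le_trans hcard (Finset.card_le_card ?_)⟩
    intro s hs
    rw [Finset.mem_filter] at hs ⊢
    exact ⟨hs.1, hs.2 r hr⟩
  · intro h
    have hRS : R ⊆ S := fun r hr => (Finset.mem_filter.1 (h hr)).1
    refine ⟨hRS, ?_⟩
    set r0 := R.max' hR with hr0
    have := (Finset.mem_filter.1 (h (R.max'_mem hR))).2
    refine le_trans this (Finset.card_le_card ?_)
    intro s hs
    rw [Finset.mem_filter] at hs ⊢
    exact ⟨hs.1, fun r hr => lt_of_le_of_lt (Finset.le_max' R r hr) hs.2⟩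

lemma count_lemma {n : ℕ} (S : Finset (Fin n)) (i m : ℕ) (hm : 1 ≤ m) :
    ((Finset.powersetCard m (Finset.univ : Finset (Fin n))).filter
      (fun R => R ⊆ S ∧ i ≤ (S.filter fun s => ∀ r ∈ R, r < s).card)).card
      = (S.card - i).choose m := by
  classical
  rw [← cardAbove S i, ← Finset.card_powersetCard]
  congr 1
  ext R
  rw [Finset.mem_filter, Finset.mem_powersetCard, Finset.mem_powersetCard]
  constructor
  · rintro ⟨⟨-, hcard⟩, hcond⟩
    have hne : R.Nonempty := by rw [← Finset.card_pos, hcard]; omega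
    exact ⟨(cond_iff S i R hne).1 (by convert hcond using 3; congr!), hcard⟩
  · rintro ⟨hsub, hcard⟩
    have hne : R.Nonempty := by rw [← Finset.card_pos, hcard]; omega
    have := (cond_iff S i R hne).2 hsub
    exact ⟨⟨Finset.subset_univ R, hcard⟩, by convert this using 3; congr!⟩

lemma intChoose_eq (X i m : ℕ) (hm : 1 ≤ m) :
    intChoose ((X : ℤ) - i) (m : ℤ) = ((X - i).choose m : ℤ) := by
  unfold intChoose
  by_cases h : (m : ℤ) ≤ (X : ℤ) - i
  · rw [if_pos ⟨Int.natCast_nonneg m, h⟩]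
    have hiX : i ≤ X := by omega
    have : ((X : ℤ) - i).toNat = X - i := by omega
    rw [this, Int.toNat_natCast]
  · rw [if_neg (by tauto)]
    by_cases hiX : i ≤ X
    · have : X - i < m := by omega
      rw [Nat.choose_eq_zero_of_lt this]; simp
    · have : X - i = 0 := by omega
      rw [this, Nat.choose_eq_zero_of_lt hm]; simp

/-- for `1 ≤ i ≤ k` and `k+1 ≤ n`,
`E[C(X-i, k+1-i)] = ∑_{r_1 < ⋯ < r_{k+1-i}} P(⋃_{(t_1,…,t_i) ∈ T(r_1,…,r_{k+1-i})}
   A_{r_1} ∩ ⋯ ∩ A_{r_{k+1-i}} ∩ A_{t_1} ∩ ⋯ ∩ A_{t_i})`,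
where the union is over all `i`-tuples `t_1 < ⋯ < t_i` of indices that all exceed
`r_{k+1-i}` (as index sets: all `i`-element subsets `T` whose elements all exceed
every element of `R`), the union over an empty index set being the empty event. -/
theorem expectation_choose_eq_sum_prob_union
    {Ω : Type*} [MeasurableSpace Ω] (P : Measure Ω) [IsProbabilityMeasure P]
    (n : ℕ) (A : Fin n → Set Ω) (hA : ∀ l, MeasurableSet (A l))
    (i k : ℕ) (hi1 : 1 ≤ i) (hik : i ≤ k) (hkn : k + 1 ≤ n) :
    (∫ ω, ((intChoose (((Finset.univ.filter (fun l => ω ∈ A l)).card : ℤ) - i)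
        ((k : ℤ) + 1 - i) : ℤ) : ℝ) ∂P)
      = ∑ R ∈ Finset.powersetCard (k + 1 - i) (Finset.univ : Finset (Fin n)),
          (P (⋃ T ∈ (Finset.powersetCard i (Finset.univ : Finset (Fin n))).filter
                (fun T => ∀ r ∈ R, ∀ t ∈ T, r < t),
              ⋂ l ∈ R ∪ T, A l)).toReal := by
  classical
  set m := k + 1 - i with hm_def
  have hm : 1 ≤ m := by omega
  set E : Finset (Fin n) → Set Ω := fun R =>
    ⋃ T ∈ (Finset.powersetCard i (Finset.univ : Finset (Fin n))).filter
        (fun T => ∀ r ∈ R, ∀ t ∈ T, r < t),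
      ⋂ l ∈ R ∪ T, A l with hE_def
  have hE : ∀ R, MeasurableSet (E R) := by
    intro R
    exact Finset.measurableSet_biUnion _ fun T _ =>
      Finset.measurableSet_biInter _ fun l _ => hA l
  -- pointwise identity
  have hpt : ∀ ω : Ω,
      ((intChoose (((Finset.univ.filter (fun l => ω ∈ A l)).card : ℤ) - i)
        ((k : ℤ) + 1 - i) : ℤ) : ℝ)
      = ∑ R ∈ Finset.powersetCard m (Finset.univ : Finset (Fin n)),
          (E R).indicator (fun _ => (1:ℝ)) ω := by
    intro ω
    set S : Finset (Fin n) := Finset.univ.filter (fun l => ω ∈ A l) with hS_def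
    have hcast : (k : ℤ) + 1 - i = (m : ℤ) := by push_cast; omega
    rw [hcast, intChoose_eq S.card i m hm]
    -- membership characterization
    have hmem : ∀ R, R ∈ Finset.powersetCard m (Finset.univ : Finset (Fin n)) →
        (ω ∈ E R ↔ (R ⊆ S ∧ i ≤ (S.filter fun s => ∀ r ∈ R, r < s).card)) := by
      intro R hRmem
      rw [Finset.mem_powersetCard] at hRmem
      have hRne : R.Nonempty := by
        rw [← Finset.card_pos, hRmem.2]; omega
      simp only [hE_def, Set.mem_iUnion, Set.mem_iInter, Finset.mem_filter,
        Finset.mem_powersetCard, exists_prop]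
      constructor
      · rintro ⟨T, ⟨⟨-, hTcard⟩, hTgt⟩, hTin⟩
        constructor
        · intro r hr
          rw [hS_def, Finset.mem_filter]
          exact ⟨Finset.mem_univ r, hTin r (Finset.mem_union_left T hr)⟩
        · have hTsub : T ⊆ S.filter fun s => ∀ r ∈ R, r < s := by
            intro t ht
            rw [Finset.mem_filter, hS_def, Finset.mem_filter]
            exact ⟨⟨Finset.mem_univ t, hTin t (Finset.mem_union_right R ht)⟩,
              fun r hr => hTgt r hr t ht⟩
          calc i = T.card := hTcard.symm
            _ ≤ _ := Finset.card_le_card hTsub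
      · rintro ⟨hRS, hcard⟩
        obtain ⟨T, hTsub, hTcard⟩ := Finset.exists_subset_card_eq hcard
        refine ⟨T, ⟨⟨Finset.subset_univ T, hTcard⟩, ?_⟩, ?_⟩
        · intro r hr t ht
          exact (Finset.mem_filter.1 (hTsub ht)).2 r hr
        · intro l hl
          rcases Finset.mem_union.1 hl with hl | hl
          · exact (Finset.mem_filter.1 (hRS hl)).2
          · exact (Finset.mem_filter.1 ((Finset.mem_filter.1 (hTsub hl)).1)).2
    -- sum of indicators = count
    have : ∑ R ∈ Finset.powersetCard m (Finset.univ : Finset (Fin n)),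
        (E R).indicator (fun _ => (1:ℝ)) ω
        = (((Finset.powersetCard m (Finset.univ : Finset (Fin n))).filter
            (fun R => R ⊆ S ∧ i ≤ (S.filter fun s => ∀ r ∈ R, r < s).card)).card : ℝ) := by
      rw [Finset.card_filter]
      push_cast
      apply Finset.sum_congr rfl
      intro R hR
      rw [Set.indicator_apply]
      by_cases h : ω ∈ E R
      · rw [if_pos h, if_pos ((hmem R hR).1 h)]
      · rw [if_neg h, if_neg (fun hc => h ((hmem R hR).2 hc))]
    rw [this, count_lemma S i m hm]; norm_cast
  -- integral manipulation
  rw [show (fun ω => ((intChoose (((Finset.univ.filter (fun l => ω ∈ A l)).card : ℤ) - i)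
        ((k : ℤ) + 1 - i) : ℤ) : ℝ))
      = fun ω => ∑ R ∈ Finset.powersetCard m (Finset.univ : Finset (Fin n)),
          (E R).indicator (fun _ => (1:ℝ)) ω from funext hpt]
  rw [integral_finset_sum _ (fun R _ => (integrable_const (1:ℝ)).indicator (hE R))]
  apply Finset.sum_congr rfl
  intro R hR
  rw [MeasureTheory.integral_indicator_const (1:ℝ) (hE R), smul_eq_mul, mul_one, measureReal_def]
end

section
/- For all integers i, k with 1 ≤ i ≤ k and k+1 ≤ n, E[C(X-i, k+1-i)] ≥ Σ_{1 ≤ r_1 < ⋯ < r_{k+1-i} ≤ n} max_{(t_1, …, t_i) ∈ T(r_1, …, r_{k+1-i})} P(A_{r_1} ∩ ⋯ ∩ A_{r_{k+1-i}} ∩ A_{t_1} ∩ ⋯ ∩ A_{t_i}), where T(r_1, …, r_{k+1-i}) = {(t_1, …, t_i) : r_{k+1-i} < t_1 < ⋯ < t_i ≤ n} and the maximum over an empty set is taken to be 0. -/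
open MeasureTheory Finset
open scoped Classical

lemma card_filter_card_lt {α : Type*} [LinearOrder α] (i : ℕ) (S : Finset α) :
    (S.filter fun x => i ≤ (S.filter (fun t => x < t)).card).card = S.card - i := by
  induction i generalizing S with
  | zero => simp
  | succ j ih =>
    rcases S.eq_empty_or_nonempty with rfl | hS
    · simp
    · set m := S.max' hS with hm
      have hstep : S.filter (fun x => j + 1 ≤ (S.filter (fun t => x < t)).card)
          = (S.erase m).filter (fun x => j ≤ ((S.erase m).filter (fun t => x < t)).card) := by
        ext x
        simp only [mem_filter, mem_erase]
        constructor
        · rintro ⟨hxS, hcard⟩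
          have hxm : x ≠ m := by
            intro hxe
            have hemp : S.filter (fun t => x < t) = ∅ := by
              apply filter_eq_empty_iff.2
              intro t ht h
              have hmt : m < t := by rw [← hxe]; exact h
              exact absurd (S.le_max' t ht) (not_le.2 hmt)
            rw [hemp] at hcard
            simp at hcard
          have hxltm : x < m := lt_of_le_of_ne (S.le_max' x hxS) hxm
          have hins : S.filter (fun t => x < t)
              = insert m ((S.erase m).filter (fun t => x < t)) := by
            ext t
            simp only [mem_filter, mem_insert, mem_erase]
            constructor
            · rintro ⟨htS, hxt⟩
              by_cases h : t = m
              · exact Or.inl h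
              · exact Or.inr ⟨⟨h, htS⟩, hxt⟩
            · rintro (rfl | ⟨⟨_, htS⟩, hxt⟩)
              · exact ⟨S.max'_mem hS, hxltm⟩
              · exact ⟨htS, hxt⟩
          have hmn : m ∉ (S.erase m).filter (fun t => x < t) := by simp
          rw [hins, card_insert_of_notMem hmn] at hcard
          exact ⟨⟨hxm, hxS⟩, Nat.lt_succ_iff.mp (Nat.lt_of_succ_le hcard)⟩
        · rintro ⟨⟨hxm, hxS⟩, hcard⟩
          have hxltm : x < m := lt_of_le_of_ne (S.le_max' x hxS) hxm
          have hins : S.filter (fun t => x < t)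
              = insert m ((S.erase m).filter (fun t => x < t)) := by
            ext t
            simp only [mem_filter, mem_insert, mem_erase]
            constructor
            · rintro ⟨htS, hxt⟩
              by_cases h : t = m
              · exact Or.inl h
              · exact Or.inr ⟨⟨h, htS⟩, hxt⟩
            · rintro (rfl | ⟨⟨_, htS⟩, hxt⟩)
              · exact ⟨S.max'_mem hS, hxltm⟩
              · exact ⟨htS, hxt⟩
          have hmn : m ∉ (S.erase m).filter (fun t => x < t) := by simp
          refine ⟨hxS, ?_⟩
          rw [hins, card_insert_of_notMem hmn]
          omega
      rw [hstep, ih, card_erase_of_mem (S.max'_mem hS)]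
      omega

lemma filter_cond_card {α : Type*} [LinearOrder α] [Fintype α] (i m : ℕ) (hm : 1 ≤ m)
    (S : Finset α) :
    ((Finset.powersetCard m (Finset.univ : Finset α)).filter
        (fun R => R ⊆ S ∧ i ≤ (S.filter (fun t => ∀ r ∈ R, r < t)).card)).card
      = (S.card - i).choose m := by
  have key : (Finset.powersetCard m (Finset.univ : Finset α)).filter
        (fun R => R ⊆ S ∧ i ≤ (S.filter (fun t => ∀ r ∈ R, r < t)).card)
      = Finset.powersetCard m (S.filter fun x => i ≤ (S.filter (fun t => x < t)).card) := by
    ext R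
    simp only [mem_filter, mem_powersetCard, subset_univ, true_and]
    constructor
    · rintro ⟨hcard, hRS, hi⟩
      refine ⟨fun x hx => ?_, hcard⟩
      refine mem_filter.2 ⟨hRS hx, le_trans hi (card_le_card ?_)⟩
      intro t ht
      simp only [mem_filter] at ht ⊢
      exact ⟨ht.1, ht.2 x hx⟩
    · rintro ⟨hRB, hcard⟩
      have hRS : R ⊆ S := fun x hx => (mem_filter.1 (hRB hx)).1
      have hne : R.Nonempty := card_pos.1 (by omega)
      have hmxB := mem_filter.1 (hRB (R.max'_mem hne))
      refine ⟨hcard, hRS, le_trans hmxB.2 (card_le_card ?_)⟩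
      intro t ht
      simp only [mem_filter] at ht ⊢
      exact ⟨ht.1, fun r hr => lt_of_le_of_lt (R.le_max' r hr) ht.2⟩
  rw [key, Finset.card_powersetCard, card_filter_card_lt]

lemma intChoose_nat_eq (c i k : ℕ) (hik : i ≤ k) :
    intChoose ((c : ℤ) - i) ((k : ℤ) + 1 - i) = ((c - i).choose (k + 1 - i) : ℤ) := by
  unfold intChoose
  split
  · rename_i h
    have h1 : ((c : ℤ) - i).toNat = c - i := by omega
    have h2 : ((k : ℤ) + 1 - i).toNat = k + 1 - i := by omega
    rw [h1, h2]
  · rename_i h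
    have : c - i < k + 1 - i := by omega
    rw [Nat.choose_eq_zero_of_lt this]
    simp

lemma measurable_filter_cond {Ω : Type*} [MeasurableSpace Ω] {n : ℕ} (A : Fin n → Set Ω)
    (hA : ∀ l, MeasurableSet (A l)) (p : Finset (Fin n) → Prop) :
    MeasurableSet {ω | p (Finset.univ.filter (fun l => ω ∈ A l))} := by
  have hS : ∀ S : Finset (Fin n),
      MeasurableSet {ω | Finset.univ.filter (fun l => ω ∈ A l) = S} := by
    intro S
    have : {ω | Finset.univ.filter (fun l => ω ∈ A l) = S}
        = ⋂ l, (if l ∈ S then A l else (A l)ᶜ) := by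
      ext ω
      simp only [Set.mem_setOf_eq, Finset.ext_iff, mem_filter, mem_univ, true_and,
        Set.mem_iInter]
      constructor
      · intro h l
        by_cases hl : l ∈ S
        · rw [if_pos hl]; exact (h l).2 hl
        · rw [if_neg hl]; exact fun hc => hl ((h l).1 hc)
      · intro h a
        have ha := h a
        by_cases hl : a ∈ S
        · rw [if_pos hl] at ha; exact ⟨fun _ => hl, fun _ => ha⟩
        · rw [if_neg hl] at ha; exact ⟨fun hc => absurd hc ha, fun hc => absurd hc hl⟩
    rw [this]
    refine MeasurableSet.iInter fun l => ?_
    by_cases hl : l ∈ S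
    · rw [if_pos hl]; exact hA l
    · rw [if_neg hl]; exact (hA l).compl
  have : {ω | p (Finset.univ.filter (fun l => ω ∈ A l))}
      = ⋃ S ∈ (Finset.univ : Finset (Finset (Fin n))).filter p,
          {ω | Finset.univ.filter (fun l => ω ∈ A l) = S} := by
    ext ω
    simp only [Set.mem_setOf_eq, Set.mem_iUnion, mem_filter, mem_univ, true_and]
    constructor
    · intro h
      exact ⟨_, h, rfl⟩
    · rintro ⟨S, hp, hS⟩
      rw [hS]; exact hp
  rw [this]
  exact MeasurableSet.biUnion (Finset.countable_toSet _) (fun S _ => hS S)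

/-- for `1 ≤ i ≤ k` and `k+1 ≤ n`,
`E[C(X-i, k+1-i)] ≥ ∑_{r_1 < ⋯ < r_{k+1-i}} max_{(t_1,…,t_i) ∈ T(r_1,…,r_{k+1-i})}
   P(A_{r_1} ∩ ⋯ ∩ A_{r_{k+1-i}} ∩ A_{t_1} ∩ ⋯ ∩ A_{t_i})`,
where the maximum is over all `i`-element index sets `T` whose elements all
exceed every element of `R` (the maximum over an empty set being `0`). -/
theorem expectation_choose_ge_sum_max
    {Ω : Type*} [MeasurableSpace Ω] (P : Measure Ω) [IsProbabilityMeasure P]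
    (n : ℕ) (A : Fin n → Set Ω) (hA : ∀ l, MeasurableSet (A l))
    (i k : ℕ) (hi1 : 1 ≤ i) (hik : i ≤ k) (hkn : k + 1 ≤ n) :
    (∫ ω, ((intChoose (((Finset.univ.filter (fun l => ω ∈ A l)).card : ℤ) - i)
        ((k : ℤ) + 1 - i) : ℤ) : ℝ) ∂P)
      ≥ ∑ R ∈ Finset.powersetCard (k + 1 - i) (Finset.univ : Finset (Fin n)),
          (((Finset.powersetCard i (Finset.univ : Finset (Fin n))).filter
                (fun T => ∀ r ∈ R, ∀ t ∈ T, r < t)).sup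
              (fun T => P (⋂ l ∈ R ∪ T, A l))).toReal := by
  have hm1 : 1 ≤ k + 1 - i := by omega
  set E : Finset (Fin n) → Set Ω :=
    fun R => {ω | R ⊆ Finset.univ.filter (fun l => ω ∈ A l) ∧
      i ≤ ((Finset.univ.filter (fun l => ω ∈ A l)).filter
            (fun t => ∀ r ∈ R, r < t)).card} with hE
  have hEmeas : ∀ R, MeasurableSet (E R) := fun R =>
    measurable_filter_cond A hA
      (fun S => R ⊆ S ∧ i ≤ (S.filter (fun t => ∀ r ∈ R, r < t)).card)
  have hpoint : ∀ ω : Ω,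
      ((intChoose (((Finset.univ.filter (fun l => ω ∈ A l)).card : ℤ) - i)
        ((k : ℤ) + 1 - i) : ℤ) : ℝ)
      = ∑ R ∈ Finset.powersetCard (k + 1 - i) (Finset.univ : Finset (Fin n)),
          Set.indicator (E R) (fun _ => (1 : ℝ)) ω := by
    intro ω
    set S := Finset.univ.filter (fun l => ω ∈ A l) with hS
    calc ((intChoose (((S.card : ℤ)) - i) ((k : ℤ) + 1 - i) : ℤ) : ℝ)
        = (((S.card - i).choose (k + 1 - i) : ℤ) : ℝ) := by
          rw [intChoose_nat_eq _ _ _ hik]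
      _ = ((((Finset.powersetCard (k + 1 - i) (Finset.univ : Finset (Fin n))).filter
              (fun R => R ⊆ S ∧ i ≤ (S.filter (fun t => ∀ r ∈ R, r < t)).card)).card : ℕ) : ℝ) := by
          have h := filter_cond_card (α := Fin n) i (k + 1 - i) hm1 S
          norm_cast
          rw [← h]
          congr!
      _ = ∑ R ∈ Finset.powersetCard (k + 1 - i) (Finset.univ : Finset (Fin n)),
            Set.indicator (E R) (fun _ => (1 : ℝ)) ω := by
          rw [Finset.card_filter]
          push_cast
          refine Finset.sum_congr rfl fun R _ => ?_
          by_cases h : R ⊆ S ∧ i ≤ (S.filter (fun t => ∀ r ∈ R, r < t)).card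
          · rw [if_pos h]
            exact (Set.indicator_of_mem (show ω ∈ E R from h) (fun _ => (1:ℝ))).symm
          · rw [if_neg h]
            exact (Set.indicator_of_notMem (show ω ∉ E R from h) (fun _ => (1:ℝ))).symm
  have hintegral : (∫ ω, ((intChoose (((Finset.univ.filter (fun l => ω ∈ A l)).card : ℤ) - i)
        ((k : ℤ) + 1 - i) : ℤ) : ℝ) ∂P)
      = ∑ R ∈ Finset.powersetCard (k + 1 - i) (Finset.univ : Finset (Fin n)),
          (P (E R)).toReal := by
    simp only [hpoint]
    rw [integral_finset_sum _ (fun R _ => (integrable_const (1 : ℝ)).indicator (hEmeas R))]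
    refine Finset.sum_congr rfl fun R _ => ?_
    rw [integral_indicator_const (1 : ℝ) (hEmeas R)]
    simp
    rfl
  rw [ge_iff_le, hintegral]
  refine Finset.sum_le_sum fun R hR => ?_
  refine ENNReal.toReal_mono (measure_ne_top P _) ?_
  refine Finset.sup_le fun T hT => ?_
  simp only [Finset.mem_filter, Finset.mem_powersetCard, Finset.subset_univ, true_and] at hT
  obtain ⟨hTcard, hTgt⟩ := hT
  refine measure_mono ?_
  intro ω hω
  simp only [Set.mem_iInter] at hω
  refine ⟨fun r hr => Finset.mem_filter.2 ⟨Finset.mem_univ r,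
    hω r (Finset.mem_union_left _ hr)⟩, ?_⟩
  have hsub : T ⊆ (Finset.univ.filter (fun l => ω ∈ A l)).filter
      (fun t => ∀ r ∈ R, r < t) := by
    intro t ht
    exact Finset.mem_filter.2 ⟨Finset.mem_filter.2 ⟨Finset.mem_univ t,
      hω t (Finset.mem_union_right _ ht)⟩, fun r hr => hTgt r hr t ht⟩
  calc i = T.card := hTcard.symm
    _ ≤ _ := Finset.card_le_card hsub
end

section
/- For all integers k, r with 1 ≤ r ≤ k ≤ n-1 and r + k odd, P(X ≥ r) ≥ Σ_{j=r}^{k} (-1)^{r+j} C(j-1, r-1) S_j + Σ_{i=1}^{r} C(k-i, r-i) Σ_{1 ≤ r_1 < ⋯ < r_{k+1-i} ≤ n} max_{(t_1, …, t_i) ∈ T(r_1, …, r_{k+1-i})} P(A_{r_1} ∩ ⋯ ∩ A_{r_{k+1-i}} ∩ A_{t_1} ∩ ⋯ ∩ A_{t_i}), where T(r_1, …, r_{k+1-i}) = {(t_1, …, t_i) : r_{k+1-i} < t_1 < ⋯ < t_i ≤ n} and the maximum over an empty set is 0. -/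
open MeasureTheory Finset
open scoped Classical

lemma altSum (M d : ℕ) : ∑ b ∈ range (d+1), (-1:ℝ)^b * (M+1).choose b = (-1)^d * M.choose d := by
  induction d with
  | zero => simp
  | succ d ih =>
    rw [sum_range_succ, ih]
    have h : (M+1).choose (d+1) = M.choose d + M.choose (d+1) := Nat.choose_succ_succ M d
    rw [h]
    push_cast
    ring

lemma hockey (M r : ℕ) : ∑ a ∈ range (r+1), (M+a).choose a = (M+r+1).choose r := by
  induction r with
  | zero => simp
  | succ r ih =>
    rw [sum_range_succ, ih, show M+(r+1) = M+r+1 from by omega,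
      show M+r+1+1 = (M+r+1)+1 from by omega]
    exact (Nat.choose_succ_succ _ _).symm

lemma prodA (r' b M : ℕ) :
    (M+r'+1).choose (r'+b) * (r'+b).choose b = (M+r'+1).choose r' * (M+1).choose b := by
  rcases le_or_gt b (M+1) with hb | hb
  · have h1 : (r'+b).choose b = (r'+b).choose r' := by
      have := Nat.choose_symm (n := r'+b) (k := r') (by omega)
      simpa [show r'+b-r' = b from by omega] using this
    rw [h1, Nat.choose_mul (by omega),
      show M+r'+1-r' = M+1 from by omega, show r'+b-r' = b from by omega]
  · rw [Nat.choose_eq_zero_of_lt (show M+r'+1 < r'+b from by omega),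
      Nat.choose_eq_zero_of_lt hb]
    ring

lemma prodB (d a M : ℕ) :
    (M+a).choose (d+a) * (d+a).choose a = (M+a).choose a * M.choose d := by
  rcases le_or_gt d M with hd | hd
  · rw [Nat.choose_mul (by omega),
      show M+a-a = M from by omega, show d+a-a = d from by omega]
  · rw [Nat.choose_eq_zero_of_lt (show M+a < d+a from by omega),
      Nat.choose_eq_zero_of_lt hd]
    ring

lemma dagger (r' d M : ℕ) (hd : Odd d) :
    ∑ b ∈ range (d+1), (-1:ℝ)^b * (r'+b).choose b * (M+r'+1).choose (r'+b)
      + ∑ a ∈ range (r'+1), ((d+a).choose a : ℝ) * (M+a).choose (d+a) = 0 := by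
  have h1 : ∑ b ∈ range (d+1), (-1:ℝ)^b * (r'+b).choose b * (M+r'+1).choose (r'+b)
      = ((M+r'+1).choose r' : ℝ) * ∑ b ∈ range (d+1), (-1:ℝ)^b * (M+1).choose b := by
    rw [mul_sum]
    refine sum_congr rfl fun b _ => ?_
    have h : ((M+r'+1).choose (r'+b) * (r'+b).choose b : ℝ)
        = ((M+r'+1).choose r' * (M+1).choose b : ℝ) := by
      exact_mod_cast congrArg (Nat.cast (R := ℝ)) (prodA r' b M)
    push_cast at h
    linear_combination ((-1:ℝ)^b) * h
  have h2 : ∑ a ∈ range (r'+1), ((d+a).choose a : ℝ) * (M+a).choose (d+a)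
      = (M.choose d : ℝ) * (M+r'+1).choose r' := by
    have e : ∑ a ∈ range (r'+1), ((d+a).choose a : ℝ) * (M+a).choose (d+a)
        = ∑ a ∈ range (r'+1), (M.choose d : ℝ) * (M+a).choose a := by
      refine sum_congr rfl fun a _ => ?_
      have h : ((M+a).choose (d+a) * (d+a).choose a : ℝ)
          = ((M+a).choose a * M.choose d : ℝ) := by
        exact_mod_cast congrArg (Nat.cast (R := ℝ)) (prodB d a M)
      push_cast at h
      linear_combination h
    rw [e, ← mul_sum]
    congr 1
    exact_mod_cast congrArg (Nat.cast (R := ℝ)) (hockey M r')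
  rw [h1, h2, altSum]
  have h3 : (-1:ℝ)^d = -1 := Odd.neg_one_pow hd
  rw [h3]; ring

lemma starId (r' d : ℕ) (hd : Odd d) : ∀ M : ℕ,
    ∑ b ∈ range (d+1), (-1:ℝ)^b * (r'+b).choose b * (M+r'+1).choose (r'+1+b)
      + ∑ a ∈ range (r'+1), ((d+a).choose a : ℝ) * (M+a).choose (d+1+a) = 1 := by
  intro M
  induction M with
  | zero =>
    have h0 : ∀ b ∈ range (d+1), b ≠ 0 →
        (-1:ℝ)^b * (r'+b).choose b * (0+r'+1).choose (r'+1+b) = 0 := by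
      intro b _ hb
      rw [Nat.choose_eq_zero_of_lt (show 0+r'+1 < r'+1+b from by omega)]
      ring
    have h1 : ∑ b ∈ range (d+1), (-1:ℝ)^b * (r'+b).choose b * (0+r'+1).choose (r'+1+b) = 1 := by
      rw [Finset.sum_eq_single 0 h0 (by simp)]
      simp
    have h2 : ∀ a ∈ range (r'+1), ((d+a).choose a : ℝ) * ((0+a).choose (d+1+a)) = 0 := by
      intro a _
      rw [Nat.choose_eq_zero_of_lt (show 0+a < d+1+a from by omega)]
      ring
    rw [h1, Finset.sum_eq_zero h2]; ring
  | succ M ih =>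
    have e1 : ∀ b : ℕ, (M+1+r'+1).choose (r'+1+b)
        = (M+r'+1).choose (r'+b) + (M+r'+1).choose (r'+1+b) := by
      intro b
      rw [show M+1+r'+1 = (M+r'+1)+1 from by omega, show r'+1+b = (r'+b)+1 from by omega]
      exact Nat.choose_succ_succ _ _
    have e2 : ∀ a : ℕ, (M+1+a).choose (d+1+a)
        = (M+a).choose (d+a) + (M+a).choose (d+1+a) := by
      intro a
      rw [show M+1+a = (M+a)+1 from by omega, show d+1+a = (d+a)+1 from by omega]
      exact Nat.choose_succ_succ _ _
    have hS1 : ∑ b ∈ range (d+1), (-1:ℝ)^b * (r'+b).choose b * (M+1+r'+1).choose (r'+1+b)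
        = ∑ b ∈ range (d+1), (-1:ℝ)^b * (r'+b).choose b * (M+r'+1).choose (r'+b)
          + ∑ b ∈ range (d+1), (-1:ℝ)^b * (r'+b).choose b * (M+r'+1).choose (r'+1+b) := by
      rw [← sum_add_distrib]
      refine sum_congr rfl fun b _ => ?_
      rw [e1 b]
      push_cast
      ring
    have hS2 : ∑ a ∈ range (r'+1), ((d+a).choose a : ℝ) * (M+1+a).choose (d+1+a)
        = ∑ a ∈ range (r'+1), ((d+a).choose a : ℝ) * (M+a).choose (d+a)
          + ∑ a ∈ range (r'+1), ((d+a).choose a : ℝ) * (M+a).choose (d+1+a) := by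
      rw [← sum_add_distrib]
      refine sum_congr rfl fun a _ => ?_
      rw [e2 a]
      push_cast
      ring
    rw [hS1, hS2]
    have hD := dagger r' d M hd
    linarith [ih, hD]

lemma keyId (r k m : ℕ) (hr : 1 ≤ r) (hrk : r ≤ k) (hodd : Odd (r+k)) :
    (∑ j ∈ Icc r k, (-1:ℝ)^(r+j) * ((j-1).choose (r-1)) * (m.choose j))
      + ∑ i ∈ Icc 1 r, ((k-i).choose (r-i) : ℝ) * ((m-i).choose (k+1-i))
      = if r ≤ m then 1 else 0 := by
  rcases lt_or_ge m r with hm | hm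
  · rw [if_neg (by omega)]
    have h1 : ∀ j ∈ Icc r k, (-1:ℝ)^(r+j) * ((j-1).choose (r-1)) * (m.choose j) = 0 := by
      intro j hj
      simp only [mem_Icc] at hj
      rw [Nat.choose_eq_zero_of_lt (show m < j from by omega)]
      ring
    have h2 : ∀ i ∈ Icc 1 r, ((k-i).choose (r-i) : ℝ) * ((m-i).choose (k+1-i)) = 0 := by
      intro i hi
      simp only [mem_Icc] at hi
      rw [Nat.choose_eq_zero_of_lt (show m-i < k+1-i from by omega)]
      ring
    rw [sum_eq_zero h1, sum_eq_zero h2]; ring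
  · rw [if_pos hm]
    obtain ⟨c, hc⟩ := hodd
    have hd : Odd (k - r) := ⟨c - r, by omega⟩
    set r' := r - 1 with hr'
    set d := k - r with hdd
    set M := m - r with hM
    have h1 : ∑ j ∈ Icc r k, (-1:ℝ)^(r+j) * ((j-1).choose (r-1)) * (m.choose j)
        = ∑ b ∈ range (d+1), (-1:ℝ)^b * (r'+b).choose b * (M+r'+1).choose (r'+1+b) := by
      rw [← Finset.Ico_add_one_right_eq_Icc, Finset.sum_Ico_eq_sum_range]
      refine sum_congr (by congr 1; omega) fun b hb => ?_
      simp only [mem_range] at hb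
      have s1 : (-1:ℝ)^(r+(r+b)) = (-1)^b := by
        rw [show r+(r+b) = 2*r+b from by omega, pow_add, pow_mul]
        norm_num
      have s2 : (r+b-1).choose (r-1) = (r'+b).choose b := by
        rw [show r+b-1 = r'+b from by omega, ← hr']
        have := Nat.choose_symm (n := r'+b) (k := b) (by omega)
        simpa [show r'+b-b = r' from by omega] using this
      have s3 : m.choose (r+b) = (M+r'+1).choose (r'+1+b) := by
        congr 1 <;> omega
      rw [s1, s2, s3]
    have h2 : ∑ i ∈ Icc 1 r, ((k-i).choose (r-i) : ℝ) * ((m-i).choose (k+1-i))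
        = ∑ a ∈ range (r'+1), ((d+a).choose a : ℝ) * (M+a).choose (d+1+a) := by
      rw [← Finset.Ico_add_one_right_eq_Icc, Finset.sum_Ico_eq_sum_range,
        show r+1-1 = r'+1 from by omega, ← Finset.sum_range_reflect]
      refine sum_congr rfl fun c2 hc2 => ?_
      simp only [mem_range] at hc2
      have s1 : k - (1+(r'+1-1-c2)) = d + c2 := by omega
      have s2 : r - (1+(r'+1-1-c2)) = c2 := by omega
      have s3 : m - (1+(r'+1-1-c2)) = M + c2 := by omega
      have s4 : k+1 - (1+(r'+1-1-c2)) = d+1+c2 := by omega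
      rw [s1, s2, s3, s4]
    rw [h1, h2, starId r' d hd M]

lemma countT {n : ℕ} (M : Finset (Fin n)) (j : ℕ) :
    ((powersetCard j (univ : Finset (Fin n))).filter (fun T => T ⊆ M)).card
      = M.card.choose j := by
  have h : (powersetCard j (univ : Finset (Fin n))).filter (fun T => T ⊆ M)
      = powersetCard j M := by
    ext T
    simp only [mem_filter, mem_powersetCard, subset_univ, true_and]
    tauto
  rw [h, card_powersetCard]

lemma cardB {n : ℕ} : ∀ (i : ℕ) (M : Finset (Fin n)),
    (M.filter (fun x => i ≤ (M.filter (fun y => x < y)).card)).card = M.card - i := by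
  intro i
  induction i with
  | zero => intro M; simp
  | succ i ih =>
    intro M
    rcases M.eq_empty_or_nonempty with hM | hM
    · subst hM; simp
    · set t := M.max' hM with ht
      have htM : t ∈ M := M.max'_mem hM
      have key : M.filter (fun x => i+1 ≤ (M.filter (fun y => x < y)).card)
          = (M.erase t).filter (fun x => i ≤ ((M.erase t).filter (fun y => x < y)).card) := by
        ext x
        simp only [mem_filter, mem_erase]
        constructor
        · rintro ⟨hx, hcard⟩
          have hxt : x ≠ t := by
            intro hxe
            have hempty : M.filter (fun y => x < y) = ∅ := by
              apply filter_eq_empty_iff.mpr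
              intro y hy
              rw [hxe]
              exact not_lt.mpr (M.le_max' y hy)
            have hc2 := hcard
            rw [hempty] at hc2
            simp at hc2
          have hxlt : x < t := lt_of_le_of_ne (M.le_max' x hx) hxt
          have hins : M.filter (fun y => x < y)
              = insert t ((M.erase t).filter (fun y => x < y)) := by
            ext y
            simp only [mem_filter, mem_insert, mem_erase]
            constructor
            · rintro ⟨hy, hxy⟩
              by_cases hyt : y = t
              · exact Or.inl hyt
              · exact Or.inr ⟨⟨hyt, hy⟩, hxy⟩
            · rintro (rfl | ⟨⟨hyt, hy⟩, hxy⟩)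
              · exact ⟨htM, hxlt⟩
              · exact ⟨hy, hxy⟩
          have hnotin : t ∉ (M.erase t).filter (fun y => x < y) := by
            simp [mem_filter, mem_erase]
          rw [hins, card_insert_of_notMem hnotin] at hcard
          exact ⟨⟨hxt, hx⟩, by omega⟩
        · rintro ⟨⟨hxt, hx⟩, hcard⟩
          refine ⟨hx, ?_⟩
          have hsub : (M.erase t).filter (fun y => x < y) ⊆ M.filter (fun y => x < y) :=
            filter_subset_filter _ (erase_subset _ _)
          have hxlt : x < t := lt_of_le_of_ne (M.le_max' x hx) hxt
          have htin : t ∈ M.filter (fun y => x < y) := mem_filter.mpr ⟨htM, hxlt⟩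
          have hnotin : t ∉ (M.erase t).filter (fun y => x < y) := by
            simp [mem_filter, mem_erase]
          have : ((M.erase t).filter (fun y => x < y)).card + 1
              ≤ (M.filter (fun y => x < y)).card := by
            have := card_le_card (insert_subset htin hsub)
            rwa [card_insert_of_notMem hnotin] at this
          omega
      rw [key, ih, card_erase_of_mem htM]
      omega

lemma countR {n : ℕ} (M : Finset (Fin n)) (i s : ℕ) (hs : 1 ≤ s) :
    ((powersetCard s (univ : Finset (Fin n))).filter
      (fun R => ∃ T ∈ (powersetCard i (univ : Finset (Fin n))).filter
          (fun T => ∀ a ∈ R, ∀ t ∈ T, a < t), R ∪ T ⊆ M)).card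
      = (M.card - i).choose s := by
  set B := M.filter (fun x => i ≤ (M.filter (fun y => x < y)).card) with hB
  have key : (powersetCard s (univ : Finset (Fin n))).filter
      (fun R => ∃ T ∈ (powersetCard i (univ : Finset (Fin n))).filter
          (fun T => ∀ a ∈ R, ∀ t ∈ T, a < t), R ∪ T ⊆ M)
      = powersetCard s B := by
    ext R
    simp only [mem_filter, mem_powersetCard, subset_univ, true_and]
    constructor
    · rintro ⟨hcard, T, ⟨hTcard, hTlt⟩, hsub⟩
      refine ⟨fun a ha => ?_, hcard⟩
      have haM : a ∈ M := hsub (mem_union_left _ ha)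
      have hTsub : T ⊆ M.filter (fun y => a < y) := by
        intro t htT
        exact mem_filter.mpr ⟨hsub (mem_union_right _ htT), hTlt a ha t htT⟩
      exact mem_filter.mpr ⟨haM, hTcard ▸ card_le_card hTsub⟩
    · rintro ⟨hRB, hcard⟩
      have hR : R.Nonempty := card_pos.mp (by omega)
      set a0 := R.max' hR with ha0
      have ha0B : a0 ∈ B := hRB (R.max'_mem hR)
      have hle : i ≤ (M.filter (fun y => a0 < y)).card := (mem_filter.mp ha0B).2
      obtain ⟨T, hTsub, hTcard⟩ := exists_subset_card_eq hle
      refine ⟨hcard, T, ⟨hTcard, fun a ha t htT => ?_⟩, ?_⟩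
      · exact lt_of_le_of_lt (R.le_max' a ha) (mem_filter.mp (hTsub htT)).2
      · apply union_subset
        · exact hRB.trans (filter_subset _ _)
        · exact hTsub.trans (filter_subset _ _)
  rw [key, card_powersetCard, ← cardB i M]

lemma measE {Ω : Type*} [MeasurableSpace Ω] {n : ℕ} (A : Fin n → Set Ω)
    (hA : ∀ l, MeasurableSet (A l)) (M : Finset (Fin n)) :
    MeasurableSet {ω | Finset.univ.filter (fun l => ω ∈ A l) = M} := by
  have h : {ω | Finset.univ.filter (fun l => ω ∈ A l) = M}
      = ⋂ l, (if l ∈ M then A l else (A l)ᶜ) := by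
    ext ω
    simp only [Set.mem_setOf_eq, Set.mem_iInter, Finset.ext_iff, mem_filter, mem_univ, true_and]
    constructor
    · intro h l
      by_cases hl : l ∈ M <;> simp only [hl, if_true, if_false] <;>
        [exact (h l).mpr hl; exact fun hc => hl ((h l).mp hc)]
    · intro h l
      have := h l
      by_cases hl : l ∈ M <;> simp only [hl, if_true, if_false] at this <;> tauto
  rw [h]
  exact MeasurableSet.iInter fun l => by
    by_cases hl : l ∈ M <;> simp only [hl, if_true, if_false]
    exacts [hA l, (hA l).compl]

lemma decompose {Ω : Type*} [MeasurableSpace Ω] {n : ℕ} (P : Measure Ω)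
    [IsProbabilityMeasure P] (A : Fin n → Set Ω)
    (hA : ∀ l, MeasurableSet (A l)) (q : Finset (Fin n) → Prop) [DecidablePred q] :
    (P {ω | q (Finset.univ.filter (fun l => ω ∈ A l))}).toReal
      = ∑ M ∈ Finset.univ.filter q,
          (P {ω | Finset.univ.filter (fun l => ω ∈ A l) = M}).toReal := by
  have hset : {ω | q (Finset.univ.filter (fun l => ω ∈ A l))}
      = ⋃ M ∈ Finset.univ.filter q, {ω | Finset.univ.filter (fun l => ω ∈ A l) = M} := by
    ext ω
    simp only [Set.mem_setOf_eq, Set.mem_iUnion, mem_filter, mem_univ, true_and, exists_prop]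
    constructor
    · intro h
      exact ⟨_, h, rfl⟩
    · rintro ⟨M, hq, hF⟩
      rw [hF]
      exact hq
  have hdisj : Set.PairwiseDisjoint (↑(Finset.univ.filter q))
      (fun M : Finset (Fin n) => {ω | Finset.univ.filter (fun l => ω ∈ A l) = M}) := by
    intro M₁ _ M₂ _ hne
    apply Set.disjoint_left.mpr
    intro ω h₁ h₂
    exact hne (h₁ ▸ h₂ ▸ rfl)
  rw [hset, measure_biUnion_finset hdisj (fun M _ => measE A hA M),
    ENNReal.toReal_sum (fun _ _ => measure_ne_top _ _)]

/-- refined lower bound.  For `1 ≤ r ≤ k ≤ n-1` with `r + k` odd,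
`P(X ≥ r) ≥ ∑_{j=r}^{k} (-1)^{r+j} C(j-1,r-1) S_j
   + ∑_{i=1}^{r} C(k-i,r-i) ∑_{r_1 < ⋯ < r_{k+1-i}}
       max_{(t_1,…,t_i) ∈ T(r_1,…,r_{k+1-i})} P(A_{r_1} ∩ ⋯ ∩ A_{r_{k+1-i}} ∩ A_{t_1} ∩ ⋯ ∩ A_{t_i})`,
where the maximum is over all `i`-element index sets `T` whose elements all
exceed every element of `R` (the maximum over an empty set being `0`). -/
theorem refined_lower_bound
    {Ω : Type*} [MeasurableSpace Ω] (P : Measure Ω) [IsProbabilityMeasure P]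
    (n : ℕ) (A : Fin n → Set Ω) (hA : ∀ l, MeasurableSet (A l))
    (k r : ℕ) (hr1 : 1 ≤ r) (hrk : r ≤ k) (hkn : k + 1 ≤ n) (hodd : Odd (r + k)) :
    (P {ω | r ≤ (Finset.univ.filter (fun l => ω ∈ A l)).card}).toReal
      ≥ (∑ j ∈ Finset.Icc r k,
          (-1 : ℝ) ^ (r + j) * ((j - 1).choose (r - 1)) *
            ∑ T ∈ Finset.powersetCard j (Finset.univ : Finset (Fin n)),
              (P (⋂ l ∈ T, A l)).toReal)
        + ∑ i ∈ Finset.Icc 1 r,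
            ((k - i).choose (r - i) : ℝ) *
              ∑ R ∈ Finset.powersetCard (k + 1 - i) (Finset.univ : Finset (Fin n)),
                (((Finset.powersetCard i (Finset.univ : Finset (Fin n))).filter
                      (fun T => ∀ a ∈ R, ∀ t ∈ T, a < t)).sup
                    (fun T => P (⋂ l ∈ R ∪ T, A l))).toReal := by
  set pr : Finset (Fin n) → ℝ :=
    fun M => (P {ω | Finset.univ.filter (fun l => ω ∈ A l) = M}).toReal with hprdef
  have hpr0 : ∀ M, 0 ≤ pr M := fun M => ENNReal.toReal_nonneg
  -- LHS decomposition
  have hL : (P {ω | r ≤ (Finset.univ.filter (fun l => ω ∈ A l)).card}).toReal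
      = ∑ M ∈ (univ : Finset (Finset (Fin n))),
          (if r ≤ M.card then (1:ℝ) else 0) * pr M := by
    rw [decompose P A hA (fun M => r ≤ M.card), sum_filter]
    exact sum_congr rfl fun M _ => by split_ifs <;> simp [hprdef]
  -- S_j decomposition
  have hS : ∀ j : ℕ,
      ∑ T ∈ powersetCard j (univ : Finset (Fin n)), (P (⋂ l ∈ T, A l)).toReal
        = ∑ M ∈ (univ : Finset (Finset (Fin n))), (M.card.choose j : ℝ) * pr M := by
    intro j
    have hterm : ∀ T : Finset (Fin n), (P (⋂ l ∈ T, A l)).toReal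
        = ∑ M ∈ Finset.univ.filter (fun M => T ⊆ M), pr M := by
      intro T
      have hset : (⋂ l ∈ T, A l)
          = {ω | T ⊆ Finset.univ.filter (fun l => ω ∈ A l)} := by
        ext ω
        simp [Set.mem_iInter, Finset.subset_iff]
      rw [hset]
      exact decompose P A hA (fun M => T ⊆ M)
    calc ∑ T ∈ powersetCard j (univ : Finset (Fin n)), (P (⋂ l ∈ T, A l)).toReal
        = ∑ T ∈ powersetCard j (univ : Finset (Fin n)),
            ∑ M ∈ (univ : Finset (Finset (Fin n))), if T ⊆ M then pr M else 0 := by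
          refine sum_congr rfl fun T _ => ?_
          rw [hterm T, sum_filter]
      _ = ∑ M ∈ (univ : Finset (Finset (Fin n))),
            ∑ T ∈ powersetCard j (univ : Finset (Fin n)), if T ⊆ M then pr M else 0 :=
          sum_comm
      _ = ∑ M ∈ (univ : Finset (Finset (Fin n))), (M.card.choose j : ℝ) * pr M := by
          refine sum_congr rfl fun M _ => ?_
          rw [← sum_filter, sum_const, countT, nsmul_eq_mul]
  -- sup bound
  have hsup : ∀ i ∈ Finset.Icc 1 r,
      ∑ R ∈ Finset.powersetCard (k + 1 - i) (Finset.univ : Finset (Fin n)),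
          (((Finset.powersetCard i (Finset.univ : Finset (Fin n))).filter
                (fun T => ∀ a ∈ R, ∀ t ∈ T, a < t)).sup
              (fun T => P (⋂ l ∈ R ∪ T, A l))).toReal
        ≤ ∑ M ∈ (univ : Finset (Finset (Fin n))),
            ((M.card - i).choose (k+1-i) : ℝ) * pr M := by
    intro i hi
    simp only [mem_Icc] at hi
    have hterm : ∀ R ∈ Finset.powersetCard (k + 1 - i) (Finset.univ : Finset (Fin n)),
        (((Finset.powersetCard i (Finset.univ : Finset (Fin n))).filter
              (fun T => ∀ a ∈ R, ∀ t ∈ T, a < t)).sup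
            (fun T => P (⋂ l ∈ R ∪ T, A l))).toReal
          ≤ ∑ M ∈ Finset.univ.filter (fun M =>
              ∃ T ∈ (Finset.powersetCard i (Finset.univ : Finset (Fin n))).filter
                (fun T => ∀ a ∈ R, ∀ t ∈ T, a < t), R ∪ T ⊆ M), pr M := by
      intro R _
      have hb : ((Finset.powersetCard i (Finset.univ : Finset (Fin n))).filter
              (fun T => ∀ a ∈ R, ∀ t ∈ T, a < t)).sup
            (fun T => P (⋂ l ∈ R ∪ T, A l))
          ≤ P {ω | ∃ T ∈ (Finset.powersetCard i (Finset.univ : Finset (Fin n))).filter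
                (fun T => ∀ a ∈ R, ∀ t ∈ T, a < t),
                R ∪ T ⊆ Finset.univ.filter (fun l => ω ∈ A l)} := by
        apply Finset.sup_le
        intro T hT
        apply measure_mono
        intro ω hω
        refine ⟨T, hT, fun l hl => ?_⟩
        simp only [mem_filter, mem_univ, true_and]
        exact Set.mem_iInter₂.mp hω l hl
      refine le_trans (ENNReal.toReal_mono (measure_ne_top _ _) hb) (le_of_eq ?_)
      exact decompose P A hA (fun M =>
            ∃ T ∈ (Finset.powersetCard i (Finset.univ : Finset (Fin n))).filter
              (fun T => ∀ a ∈ R, ∀ t ∈ T, a < t), R ∪ T ⊆ M)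
    calc ∑ R ∈ Finset.powersetCard (k + 1 - i) (Finset.univ : Finset (Fin n)),
          (((Finset.powersetCard i (Finset.univ : Finset (Fin n))).filter
                (fun T => ∀ a ∈ R, ∀ t ∈ T, a < t)).sup
              (fun T => P (⋂ l ∈ R ∪ T, A l))).toReal
        ≤ ∑ R ∈ Finset.powersetCard (k + 1 - i) (Finset.univ : Finset (Fin n)),
            ∑ M ∈ Finset.univ.filter (fun M =>
              ∃ T ∈ (Finset.powersetCard i (Finset.univ : Finset (Fin n))).filter
                (fun T => ∀ a ∈ R, ∀ t ∈ T, a < t), R ∪ T ⊆ M), pr M :=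
          sum_le_sum hterm
      _ = ∑ R ∈ Finset.powersetCard (k + 1 - i) (Finset.univ : Finset (Fin n)),
            ∑ M ∈ (univ : Finset (Finset (Fin n))),
              if (∃ T ∈ (Finset.powersetCard i (Finset.univ : Finset (Fin n))).filter
                (fun T => ∀ a ∈ R, ∀ t ∈ T, a < t), R ∪ T ⊆ M) then pr M else 0 := by
          refine sum_congr rfl fun R _ => ?_
          rw [sum_filter]
      _ = ∑ M ∈ (univ : Finset (Finset (Fin n))),
            ∑ R ∈ Finset.powersetCard (k + 1 - i) (Finset.univ : Finset (Fin n)),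
              if (∃ T ∈ (Finset.powersetCard i (Finset.univ : Finset (Fin n))).filter
                (fun T => ∀ a ∈ R, ∀ t ∈ T, a < t), R ∪ T ⊆ M) then pr M else 0 :=
          sum_comm
      _ = ∑ M ∈ (univ : Finset (Finset (Fin n))),
            ((M.card - i).choose (k+1-i) : ℝ) * pr M := by
          refine sum_congr rfl fun M _ => ?_
          rw [← sum_filter, sum_const, nsmul_eq_mul]
          congr 1
          norm_cast
          convert countR M i (k+1-i) (by omega) using 3
  -- assemble
  rw [ge_iff_le, hL]
  have step1 : (∑ j ∈ Finset.Icc r k,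
          (-1 : ℝ) ^ (r + j) * ((j - 1).choose (r - 1)) *
            ∑ T ∈ Finset.powersetCard j (Finset.univ : Finset (Fin n)),
              (P (⋂ l ∈ T, A l)).toReal)
        + ∑ i ∈ Finset.Icc 1 r,
            ((k - i).choose (r - i) : ℝ) *
              ∑ R ∈ Finset.powersetCard (k + 1 - i) (Finset.univ : Finset (Fin n)),
                (((Finset.powersetCard i (Finset.univ : Finset (Fin n))).filter
                      (fun T => ∀ a ∈ R, ∀ t ∈ T, a < t)).sup
                    (fun T => P (⋂ l ∈ R ∪ T, A l))).toReal
      ≤ (∑ j ∈ Finset.Icc r k,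
          (-1 : ℝ) ^ (r + j) * ((j - 1).choose (r - 1)) *
            ∑ M ∈ (univ : Finset (Finset (Fin n))), (M.card.choose j : ℝ) * pr M)
        + ∑ i ∈ Finset.Icc 1 r,
            ((k - i).choose (r - i) : ℝ) *
              ∑ M ∈ (univ : Finset (Finset (Fin n))),
                ((M.card - i).choose (k+1-i) : ℝ) * pr M := by
    apply add_le_add
    · apply le_of_eq
      refine sum_congr rfl fun j _ => ?_
      rw [hS j]
    · apply sum_le_sum
      intro i hi
      exact mul_le_mul_of_nonneg_left (hsup i hi) (Nat.cast_nonneg _)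
  refine step1.trans (le_of_eq ?_)
  have swap : ∀ (s : Finset ℕ) (c : ℕ → ℝ) (f : ℕ → Finset (Fin n) → ℝ),
      ∑ j ∈ s, c j * ∑ M ∈ (univ : Finset (Finset (Fin n))), f j M * pr M
        = ∑ M ∈ (univ : Finset (Finset (Fin n))), (∑ j ∈ s, c j * f j M) * pr M := by
    intro s c f
    calc ∑ j ∈ s, c j * ∑ M ∈ (univ : Finset (Finset (Fin n))), f j M * pr M
        = ∑ j ∈ s, ∑ M ∈ (univ : Finset (Finset (Fin n))), c j * (f j M * pr M) := by
          refine sum_congr rfl fun j _ => ?_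
          rw [mul_sum]
      _ = ∑ M ∈ (univ : Finset (Finset (Fin n))),
            ∑ j ∈ s, c j * (f j M * pr M) := sum_comm
      _ = ∑ M ∈ (univ : Finset (Finset (Fin n))), (∑ j ∈ s, c j * f j M) * pr M := by
          refine sum_congr rfl fun M _ => ?_
          rw [sum_mul]
          exact sum_congr rfl fun j _ => by ring
  rw [swap (Finset.Icc r k) (fun j => (-1 : ℝ) ^ (r + j) * ((j - 1).choose (r - 1)))
      (fun j M => (M.card.choose j : ℝ)),
    swap (Finset.Icc 1 r) (fun i => ((k - i).choose (r - i) : ℝ))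
      (fun i M => ((M.card - i).choose (k+1-i) : ℝ)),
    ← sum_add_distrib]
  refine sum_congr rfl fun M _ => ?_
  rw [← add_mul]
  congr 1
  exact keyId r k M.card hr1 hrk hodd
end

section
/- Let k ≥ 1 and s ≥ 1 be integers and let i_1, …, i_k, j_1, …, j_s be k+s distinct elements of {1, …, n}. For a uniformly random permutation of {1, …, n}, the probability that j_s is the only one of j_1, …, j_s whose position in the permutation is after the positions of all of i_1, …, i_k equals k/((k+s)(k+s-1)). Equivalently, the number of permutations σ of {1, …, n} in which j_s appears after every i_1, …, i_k while each of j_1, …, j_{s-1} appears before at least one of i_1, …, i_k, is n! · k/((k+s)(k+s-1)). -/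
open Finset
open scoped Classical

lemma fiber_mul_card {G X : Type*} [Group G] [Fintype G] [DecidableEq X]
    (A : Finset G) (B : Finset X) (f : G → X)
    (hf : ∀ σ ∈ A, f σ ∈ B)
    (hmove : ∀ x ∈ B, ∀ y ∈ B, ∃ g : G, ∀ σ ∈ A, f σ = x → g * σ ∈ A ∧ f (g * σ) = y) :
    ∀ x ∈ B, B.card * (A.filter (fun σ => f σ = x)).card = A.card := by
  have key : ∀ x ∈ B, ∀ y ∈ B,
      (A.filter (fun σ => f σ = x)).card ≤ (A.filter (fun σ => f σ = y)).card := by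
    intro x hx y hy
    obtain ⟨g, hg⟩ := hmove x hx y hy
    apply Finset.card_le_card_of_injOn (fun σ => g * σ)
    · intro σ hσ
      simp only [Finset.mem_coe, Finset.mem_filter] at hσ ⊢
      obtain ⟨h1, h2⟩ := hg σ hσ.1 hσ.2
      exact ⟨h1, h2⟩
    · intro a _ b _ h
      exact mul_left_cancel h
  intro x hx
  have hsum : A.card = ∑ y ∈ B, (A.filter (fun σ => f σ = y)).card :=
    Finset.card_eq_sum_card_fiberwise hf
  rw [hsum, Finset.sum_congr rfl (fun y hy =>
    le_antisymm (key y hy x hx) (key x hx y hy)), Finset.sum_const, smul_eq_mul]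

lemma card_perm_one {α : Type*} [Fintype α] [DecidableEq α] (x y : α) :
    Fintype.card α *
      ((univ : Finset (Equiv.Perm α)).filter (fun r => r x = y)).card
      = (Fintype.card α).factorial := by
  have := fiber_mul_card (univ : Finset (Equiv.Perm α)) (univ : Finset α)
    (fun r => r x) (fun _ _ => mem_univ _) ?_ y (mem_univ _)
  · simpa [Fintype.card_perm] using this
  · intro a _ b _
    refine ⟨Equiv.swap a b, fun σ _ hσ => ⟨mem_univ _, ?_⟩⟩
    simp [Equiv.Perm.mul_apply, hσ]

lemma card_perm_two {α : Type*} [Fintype α] [DecidableEq α] (x1 x2 y1 y2 : α)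
    (hx : x1 ≠ x2) (hy : y1 ≠ y2) :
    Fintype.card α * (Fintype.card α - 1) *
      ((univ : Finset (Equiv.Perm α)).filter (fun r => r x1 = y1 ∧ r x2 = y2)).card
      = (Fintype.card α).factorial := by
  set A : Finset (Equiv.Perm α) := univ.filter (fun r => r x1 = y1)
  have h2 : (Fintype.card α - 1) *
      (A.filter (fun r => r x2 = y2)).card = A.card := by
    have := fiber_mul_card A (univ.erase y1) (fun r => r x2) ?_ ?_ y2 ?_
    · rwa [Finset.card_erase_of_mem (mem_univ _), Finset.card_univ] at this
    · intro σ hσ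
      simp only [A, Finset.mem_filter] at hσ
      refine Finset.mem_erase.2 ⟨fun h => hx ?_, mem_univ _⟩
      exact σ.injective (by rw [h, hσ.2])
    · intro a ha b hb
      have ha1 : a ≠ y1 := (Finset.mem_erase.1 ha).1
      have hb1 : b ≠ y1 := (Finset.mem_erase.1 hb).1
      refine ⟨Equiv.swap a b, fun σ hσ hσ2 => ?_⟩
      simp only [A, Finset.mem_filter, mem_univ, true_and] at hσ ⊢
      constructor
      · simp [Equiv.Perm.mul_apply, hσ, Equiv.swap_apply_of_ne_of_ne ha1.symm hb1.symm]
      · simp [Equiv.Perm.mul_apply, hσ2]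
    · exact Finset.mem_erase.2 ⟨hy.symm, mem_univ _⟩
  have h1 := card_perm_one (α := α) x1 y1
  have : A.filter (fun r => r x2 = y2)
      = univ.filter (fun r => r x1 = y1 ∧ r x2 = y2) := by
    simp [A, Finset.filter_filter]
  rw [this] at h2
  rw [mul_assoc, h2]
  exact h1

noncomputable def rk {m n : ℕ} (v : Fin m → Fin n) : Equiv.Perm (Fin m) :=
  (Tuple.sort v)⁻¹

lemma rk_lt_iff {m n : ℕ} {v : Fin m → Fin n} (hv : Function.Injective v)
    (a b : Fin m) : rk v a < rk v b ↔ v a < v b := by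
  have hsm : StrictMono (v ∘ Tuple.sort v) :=
    (Tuple.monotone_sort v).strictMono_of_injective
      (hv.comp (Tuple.sort v).injective)
  have ha : v a = (v ∘ Tuple.sort v) (rk v a) := by simp [rk]
  have hb : v b = (v ∘ Tuple.sort v) (rk v b) := by simp [rk]
  rw [ha, hb]
  exact (hsm.lt_iff_lt).symm

lemma rk_unique {m n : ℕ} {v : Fin m → Fin n} (hv : Function.Injective v)
    (r : Equiv.Perm (Fin m)) (hr : ∀ a b, r a < r b ↔ v a < v b) :
    r = rk v := by
  set q : Equiv.Perm (Fin m) := r.symm.trans (rk v)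
  have hq : StrictMono q := by
    intro a b hab
    have h1 : r (r.symm a) < r (r.symm b) := by simpa using hab
    have h2 : v (r.symm a) < v (r.symm b) := (hr _ _).1 h1
    exact (rk_lt_iff hv _ _).2 h2
  have : (hq.orderIsoOfSurjective q q.surjective : Fin m ≃o Fin m)
      = OrderIso.refl (Fin m) := Subsingleton.elim _ _
  have hid : ∀ a, q a = a := fun a => by
    have := congrArg (fun (f : Fin m ≃o Fin m) => f a) this
    simpa using this
  ext x
  have := hid (r x)
  exact congrArg Fin.val (show r x = rk v x by simpa [q] using this.symm)

lemma rk_equivariant {m n : ℕ} (E : Fin m ↪ Fin n) (ρ : Equiv.Perm (Fin m))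
    (σ : Equiv.Perm (Fin n)) :
    rk (((Equiv.Perm.viaFintypeEmbedding ρ E) * σ).symm ∘ E)
      = rk (σ.symm ∘ E) * ρ⁻¹ := by
  set g := Equiv.Perm.viaFintypeEmbedding ρ E
  set v : Fin m → Fin n := σ.symm ∘ E
  have hv : Function.Injective v := σ.symm.injective.comp E.injective
  have hw : Function.Injective ((g * σ).symm ∘ E) :=
    (g * σ).symm.injective.comp E.injective
  have hgE : ∀ a, g.symm (E a) = E (ρ⁻¹ a) := by
    intro a
    apply g.injective
    rw [Equiv.apply_symm_apply]
    have h := Equiv.Perm.viaFintypeEmbedding_apply_image ρ E (ρ⁻¹ a)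
    simp only [Equiv.Perm.coe_inv, Equiv.apply_symm_apply] at h
    exact h.symm
  have hwv : ∀ a, ((g * σ).symm ∘ E) a = v (ρ⁻¹ a) := by
    intro a
    simp only [Function.comp_apply, v]
    rw [show (g * σ).symm (E a) = σ.symm (g.symm (E a)) from rfl, hgE]
  symm
  apply rk_unique hw
  intro a b
  rw [hwv a, hwv b]
  simpa using rk_lt_iff hv (ρ⁻¹ a) (ρ⁻¹ b)

lemma perm_rank_fiber {m n : ℕ} (E : Fin m ↪ Fin n) (r0 : Equiv.Perm (Fin m)) :
    m.factorial *
      ((univ : Finset (Equiv.Perm (Fin n))).filter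
        (fun σ => rk (σ.symm ∘ E) = r0)).card = n.factorial := by
  have := fiber_mul_card (univ : Finset (Equiv.Perm (Fin n)))
    (univ : Finset (Equiv.Perm (Fin m)))
    (fun σ => rk (σ.symm ∘ E)) (fun _ _ => mem_univ _) ?_ r0 (mem_univ _)
  · simpa [Fintype.card_perm] using this
  · intro x _ y _
    refine ⟨Equiv.Perm.viaFintypeEmbedding (y⁻¹ * x) E, fun σ _ hσ => ⟨mem_univ _, ?_⟩⟩
    beta_reduce at hσ ⊢
    rw [rk_equivariant, hσ, mul_inv_rev, inv_inv, mul_inv_cancel_left]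

lemma good_count (m k : ℕ) (hk : 1 ≤ k) (hkm : k + 1 ≤ m) :
    m * (m - 1) *
      ((univ : Finset (Equiv.Perm (Fin m))).filter (fun r =>
        r ⟨m - 1, by omega⟩ = ⟨m - 1, by omega⟩ ∧
        ((r.symm ⟨m - 2, by omega⟩ : Fin m) : ℕ) < k)).card
      = k * m.factorial := by
  have hm : 2 ≤ m := by omega
  set lastI : Fin m := ⟨m - 1, by omega⟩
  set sndI : Fin m := ⟨m - 2, by omega⟩
  set G' := (univ : Finset (Equiv.Perm (Fin m))).filter (fun r =>
        r lastI = lastI ∧ ((r.symm sndI : Fin m) : ℕ) < k) with hG'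
  set B : Finset (Fin m) := univ.filter (fun a => (a : ℕ) < k) with hB
  have hBcard : B.card = k := by
    have : B = Finset.Iio (⟨k, by omega⟩ : Fin m) := by
      ext a
      simp [hB, Fin.lt_def]
    rw [this, Fin.card_Iio]
  have hsum : G'.card = ∑ a ∈ B, (G'.filter (fun r => r.symm sndI = a)).card := by
    apply Finset.card_eq_sum_card_fiberwise
    intro r hr
    simp only [hG', Finset.mem_coe, Finset.mem_filter] at hr
    simp [hB, hr.2.2]
  have hterm : ∀ a ∈ B, m * (m - 1) * (G'.filter (fun r => r.symm sndI = a)).card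
      = m.factorial := by
    intro a ha
    have hak : (a : ℕ) < k := by simpa [hB] using ha
    have heq : G'.filter (fun r => r.symm sndI = a)
        = univ.filter (fun r => r lastI = lastI ∧ r a = sndI) := by
      ext r
      simp only [hG', Finset.filter_filter, Finset.mem_filter, mem_univ, true_and]
      constructor
      · rintro ⟨⟨h1, _⟩, h3⟩
        exact ⟨h1, by rw [← h3, Equiv.apply_symm_apply]⟩
      · rintro ⟨h1, h2⟩
        have h3 : r.symm sndI = a := by rw [← h2, Equiv.symm_apply_apply]
        exact ⟨⟨h1, by rw [h3]; exact hak⟩, h3⟩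
    rw [heq]
    have := card_perm_two (α := Fin m) lastI a lastI sndI
      (by intro h; apply_fun Fin.val at h; simp [lastI] at h; omega)
      (by intro h; apply_fun Fin.val at h; simp [lastI, sndI] at h; omega)
    simpa [Fintype.card_fin] using this
  calc m * (m - 1) * G'.card
      = ∑ a ∈ B, m * (m - 1) * (G'.filter (fun r => r.symm sndI = a)).card := by
        rw [hsum, Finset.mul_sum]
    _ = ∑ a ∈ B, m.factorial := Finset.sum_congr rfl hterm
    _ = k * m.factorial := by rw [Finset.sum_const, hBcard, smul_eq_mul]

lemma cond_iff_s17 {n k s : ℕ} (hk : 1 ≤ k) (hs : 1 ≤ s)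
    (v : Fin (k + s) → Fin n) (hv : Function.Injective v) :
    ((∀ a : Fin k, v ⟨(a : ℕ), by omega⟩ < v ⟨k + s - 1, by omega⟩) ∧
      ∀ b : Fin s, b ≠ ⟨s - 1, Nat.sub_lt hs Nat.one_pos⟩ →
        ∃ a : Fin k, v ⟨k + (b : ℕ), by omega⟩ < v ⟨(a : ℕ), by omega⟩)
    ↔ (rk v ⟨k + s - 1, by omega⟩ = ⟨k + s - 1, by omega⟩ ∧
       (((rk v).symm ⟨k + s - 2, by omega⟩ : Fin (k + s)) : ℕ) < k) := by
  have hr : ∀ a b, rk v a < rk v b ↔ v a < v b := fun a b => rk_lt_iff hv a b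
  set r := rk v with hr_def
  set lastI : Fin (k + s) := ⟨k + s - 1, by omega⟩ with hlastI
  set sndI : Fin (k + s) := ⟨k + s - 2, by omega⟩ with hsndI
  constructor
  · rintro ⟨h1, h2⟩
    have h1' : ∀ a : Fin k, r ⟨(a : ℕ), by omega⟩ < r lastI :=
      fun a => (hr _ _).2 (h1 a)
    have hlv : (lastI : ℕ) = k + s - 1 := rfl
    have hsv : (sndI : ℕ) = k + s - 2 := rfl
    have hall : ∀ c : Fin (k + s), (c : ℕ) ≠ k + s - 1 → r c < r lastI := by
      intro c hc1
      by_cases hck : (c : ℕ) < k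
      · exact h1' ⟨(c : ℕ), hck⟩
      · have hkc : k ≤ (c : ℕ) := le_of_not_gt hck
        have hcs : (c : ℕ) < k + s := c.isLt
        obtain ⟨a, ha⟩ := h2 ⟨(c : ℕ) - k, by omega⟩
          (fun h => by
            have h' : (c : ℕ) - k = s - 1 := congrArg Fin.val h
            omega)
        have hcb : (⟨k + ((⟨(c : ℕ) - k, by omega⟩ : Fin s) : ℕ), by omega⟩ : Fin (k + s)) = c :=
          Fin.ext (show k + ((c : ℕ) - k) = (c : ℕ) by omega)
        exact ((hr _ _).2 (lt_of_le_of_lt (le_of_eq (congrArg v hcb).symm) ha)).trans (h1' a)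
    have hrlast : r lastI = lastI := by
      by_contra hne
      have h5 : r (r.symm lastI) < r lastI := by
        apply hall
        intro h
        have h' : r.symm lastI = lastI := Fin.ext (by rw [h, hlv])
        exact hne ((congrArg r h').symm.trans (r.apply_symm_apply lastI))
      have h6 := Fin.lt_def.mp (lt_of_le_of_lt (le_of_eq (r.apply_symm_apply lastI).symm) h5)
      have := (r lastI).isLt
      omega
    refine ⟨hrlast, ?_⟩
    by_contra hck
    push_neg at hck
    have hrc : r (r.symm sndI) = sndI := r.apply_symm_apply sndI
    have hcs : ((r.symm sndI : Fin (k + s)) : ℕ) < k + s := (r.symm sndI).isLt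
    have hcne : ((r.symm sndI : Fin (k + s)) : ℕ) ≠ k + s - 1 := by
      intro h
      have h' : r.symm sndI = lastI := Fin.ext (by rw [h, hlv])
      rw [h', hrlast] at hrc
      have := congrArg Fin.val hrc
      omega
    obtain ⟨a, ha⟩ := h2 ⟨((r.symm sndI : Fin (k + s)) : ℕ) - k, by omega⟩
      (fun h => by
        have h' : ((r.symm sndI : Fin (k + s)) : ℕ) - k = s - 1 := congrArg Fin.val h
        omega)
    have hcb : (⟨k + ((⟨((r.symm sndI : Fin (k + s)) : ℕ) - k, by omega⟩ : Fin s) : ℕ),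
        by omega⟩ : Fin (k + s)) = r.symm sndI :=
      Fin.ext (show k + (((r.symm sndI : Fin (k + s)) : ℕ) - k)
        = ((r.symm sndI : Fin (k + s)) : ℕ) by omega)
    have h4 : sndI < r ⟨(a : ℕ), by omega⟩ :=
      lt_of_le_of_lt (le_of_eq hrc.symm)
        ((hr _ _).2 (lt_of_le_of_lt (le_of_eq (congrArg v hcb).symm) ha))
    have h5 : r ⟨(a : ℕ), by omega⟩ < r lastI := by
      apply hall
      show (a : ℕ) ≠ k + s - 1
      have := a.isLt
      omega
    have h4' := Fin.lt_def.mp h4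
    have h5' := Fin.lt_def.mp (lt_of_lt_of_le h5 (le_of_eq hrlast))
    omega
  · rintro ⟨hrlast, hsnd⟩
    have hlt_last : ∀ c : Fin (k + s), c ≠ lastI → r c < r lastI := by
      intro c hc
      rw [hrlast, Fin.lt_def]
      have h1 : r c ≠ lastI := fun h => hc (r.injective (h.trans hrlast.symm))
      have h2 : ((r c) : ℕ) ≠ k + s - 1 := fun h => h1 (Fin.ext h)
      have := (r c).isLt
      simp only [hlastI]
      omega
    constructor
    · intro a
      have h6 := hlt_last ⟨(a : ℕ), by omega⟩ (by
        intro h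
        apply_fun Fin.val at h
        simp only [hlastI] at h
        have := a.isLt
        omega)
      exact (hr _ _).1 h6
    · intro b hb
      refine ⟨⟨((r.symm sndI) : ℕ), hsnd⟩, ?_⟩
      have hrc0 : r (r.symm sndI) = sndI := Equiv.apply_symm_apply _ _
      set c : Fin (k + s) := ⟨k + (b : ℕ), by omega⟩ with hc_def
      have hcne : c ≠ lastI := by
        intro h
        apply_fun Fin.val at h
        simp only [hc_def, hlastI] at h
        have hbb := b.isLt
        apply hb
        apply Fin.ext
        simp
        omega
      have hcc0 : c ≠ r.symm sndI := by
        intro h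
        apply_fun Fin.val at h
        simp only [hc_def] at h
        omega
      have h1 : r c ≠ lastI := fun h => hcne (r.injective (h.trans hrlast.symm))
      have h2 : r c ≠ sndI := fun h => hcc0 (r.injective (h.trans hrc0.symm))
      have h3 : r c < r (r.symm sndI) := by
        rw [hrc0, Fin.lt_def]
        have e1 : ((r c) : ℕ) ≠ k + s - 1 := fun h => h1 (Fin.ext h)
        have e2 : ((r c) : ℕ) ≠ k + s - 2 := fun h => h2 (Fin.ext h)
        have := (r c).isLt
        simp only [hsndI]
        omega
      have h4 : v c < v (r.symm sndI) := (hr _ _).1 h3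
      exact h4

set_option maxHeartbeats 2000000 in
theorem random_permutation_last_follower_probability
    (n k s : ℕ) (hk : 1 ≤ k) (hs : 1 ≤ s)
    (i : Fin k → Fin n) (j : Fin s → Fin n)
    (hi : Function.Injective i) (hj : Function.Injective j)
    (hij : ∀ a b, i a ≠ j b) :
    ((Finset.univ.filter (fun σ : Equiv.Perm (Fin n) =>
          (∀ a, σ.symm (i a) < σ.symm (j ⟨s - 1, by omega⟩)) ∧
          ∀ b : Fin s, b ≠ ⟨s - 1, by omega⟩ →
            ∃ a, σ.symm (j b) < σ.symm (i a))).card : ℝ) / (n.factorial : ℝ)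
      = (k : ℝ) / (((k : ℝ) + s) * ((k : ℝ) + s - 1)) := by
  set e : Fin (k + s) → Fin n := fun x =>
    if h : (x : ℕ) < k then i ⟨x, h⟩
    else j ⟨(x : ℕ) - k, by have := x.isLt; omega⟩ with he_def
  have he : Function.Injective e := by
    intro x y hxy
    simp only [e] at hxy
    by_cases hx : (x : ℕ) < k <;> by_cases hy : (y : ℕ) < k
    · rw [dif_pos hx, dif_pos hy] at hxy
      exact Fin.ext (by simpa [Fin.ext_iff] using hi hxy)
    · rw [dif_pos hx, dif_neg hy] at hxy
      exact absurd hxy (hij _ _)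
    · rw [dif_neg hx, dif_pos hy] at hxy
      exact absurd hxy.symm (hij _ _)
    · rw [dif_neg hx, dif_neg hy] at hxy
      have h2 : (x : ℕ) - k = (y : ℕ) - k := by simpa [Fin.ext_iff] using hj hxy
      exact Fin.ext (by omega)
  set E : Fin (k + s) ↪ Fin n := ⟨e, he⟩ with hE_def
  set F : Equiv.Perm (Fin n) → Equiv.Perm (Fin (k + s)) :=
    fun σ => rk (σ.symm ∘ E) with hF
  set lastI : Fin (k + s) := ⟨k + s - 1, by omega⟩ with hlastI
  set sndI : Fin (k + s) := ⟨k + s - 2, by omega⟩ with hsndI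
  have he_i : ∀ (a : Fin k), e ⟨(a : ℕ), by omega⟩ = i a := by
    intro a
    simp only [e]
    rw [dif_pos a.isLt]
  have he_j : ∀ (b : Fin s), e ⟨k + (b : ℕ), by omega⟩ = j b := by
    intro b
    simp only [e]
    rw [dif_neg (by omega)]
    congr 1
    exact Fin.ext (by simp)
  have he_last : e lastI = j ⟨s - 1, by omega⟩ := by
    have : lastI = ⟨k + ((⟨s - 1, by omega⟩ : Fin s) : ℕ), by omega⟩ :=
      Fin.ext (by simp [hlastI]; omega)
    rw [this, he_j]
  -- the key equivalence
  have hv_i : ∀ (σ : Equiv.Perm (Fin n)) (a : Fin k),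
      (σ.symm ∘ E) ⟨(a : ℕ), by omega⟩ = σ.symm (i a) :=
    fun σ a => congrArg σ.symm (he_i a)
  have hv_j : ∀ (σ : Equiv.Perm (Fin n)) (b : Fin s),
      (σ.symm ∘ E) ⟨k + (b : ℕ), by omega⟩ = σ.symm (j b) :=
    fun σ b => congrArg σ.symm (he_j b)
  have hv_last : ∀ (σ : Equiv.Perm (Fin n)),
      (σ.symm ∘ E) ⟨k + s - 1, by omega⟩ = σ.symm (j ⟨s - 1, by omega⟩) :=
    fun σ => congrArg σ.symm he_last
  have hcond : ∀ σ : Equiv.Perm (Fin n),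
      ((∀ a, σ.symm (i a) < σ.symm (j ⟨s - 1, by omega⟩)) ∧
        ∀ b : Fin s, b ≠ ⟨s - 1, by omega⟩ →
          ∃ a, σ.symm (j b) < σ.symm (i a))
      ↔ (F σ lastI = lastI ∧ ((F σ).symm sndI : Fin (k + s)).1 < k) := by
    intro σ
    refine Iff.trans ?_
      (cond_iff_s17 hk hs (σ.symm ∘ E) (σ.symm.injective.comp E.injective))
    constructor
    · rintro ⟨h1, h2⟩
      refine ⟨fun a => ?_, fun b hb => ?_⟩
      · rw [hv_i σ a, hv_last σ]
        exact h1 a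
      · obtain ⟨a, ha⟩ := h2 b hb
        exact ⟨a, by rw [hv_j σ b, hv_i σ a]; exact ha⟩
    · rintro ⟨h1, h2⟩
      refine ⟨fun a => ?_, fun b hb => ?_⟩
      · have h3 := h1 a
        rw [hv_i σ a, hv_last σ] at h3
        exact h3
      · obtain ⟨a, ha⟩ := h2 b hb
        rw [hv_j σ b, hv_i σ a] at ha
        exact ⟨a, ha⟩
  -- counting
  obtain ⟨G', hG'⟩ : ∃ G', G' = (univ : Finset (Equiv.Perm (Fin (k + s)))).filter
      (fun r => r lastI = lastI ∧ ((r.symm sndI : Fin (k + s)) : ℕ) < k) := ⟨_, rfl⟩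
  have hGood : (k + s) * (k + s - 1) * G'.card = k * (k + s).factorial := by
    rw [hG']
    exact good_count (k + s) k hk (by omega)
  have hfilter_eq : (Finset.univ.filter (fun σ : Equiv.Perm (Fin n) =>
          (∀ a, σ.symm (i a) < σ.symm (j ⟨s - 1, by omega⟩)) ∧
          ∀ b : Fin s, b ≠ ⟨s - 1, by omega⟩ →
            ∃ a, σ.symm (j b) < σ.symm (i a)))
      = univ.filter (fun σ => F σ ∈ G') := by
    apply Finset.filter_congr
    intro σ _
    rw [hcond σ, hG']
    simp only [Finset.mem_filter, mem_univ, true_and, eq_iff_iff]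
  have hcardsum : (univ.filter (fun σ : Equiv.Perm (Fin n) => F σ ∈ G')).card
      = ∑ r ∈ G', (univ.filter (fun σ => F σ = r)).card := by
    rw [Finset.card_eq_sum_card_fiberwise (f := F) (s := univ.filter (fun σ : Equiv.Perm (Fin n) => F σ ∈ G')) (t := G')
      (fun σ hσ => (Finset.mem_filter.1 (Finset.mem_coe.1 hσ)).2)]
    apply Finset.sum_congr rfl
    intro r hrG
    congr 1
    ext σ
    simp only [Finset.mem_filter, mem_univ, true_and]
    constructor
    · rintro ⟨_, h⟩; exact h
    · intro h; exact ⟨by rw [h]; exact hrG, h⟩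
  have hfib : ∀ r ∈ G', (k + s).factorial * (univ.filter (fun σ => F σ = r)).card
      = n.factorial := fun r _ => perm_rank_fiber E r
  have hMain : (k + s).factorial * (univ.filter (fun σ : Equiv.Perm (Fin n) => F σ ∈ G')).card
      = G'.card * n.factorial := by
    rw [hcardsum, Finset.mul_sum]
    rw [Finset.sum_congr rfl hfib, Finset.sum_const, smul_eq_mul]
  rw [hfilter_eq]
  have hKey : (k + s) * (k + s - 1) *
      (univ.filter (fun σ : Equiv.Perm (Fin n) => F σ ∈ G')).card = k * n.factorial := by
    apply Nat.eq_of_mul_eq_mul_left (Nat.factorial_pos (k + s))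
    calc (k + s).factorial * ((k + s) * (k + s - 1) *
          (univ.filter (fun σ : Equiv.Perm (Fin n) => F σ ∈ G')).card)
        = (k + s) * (k + s - 1) * ((k + s).factorial *
          (univ.filter (fun σ : Equiv.Perm (Fin n) => F σ ∈ G')).card) := by ring
      _ = (k + s) * (k + s - 1) * (G'.card * n.factorial) := by rw [hMain]
      _ = ((k + s) * (k + s - 1) * G'.card) * n.factorial := by ring
      _ = (k * (k + s).factorial) * n.factorial := by rw [hGood]
      _ = (k + s).factorial * (k * n.factorial) := by ring
  -- final real arithmetic
  have hcast : ((k : ℝ) + s) * ((k : ℝ) + s - 1) *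
      ((univ.filter (fun σ : Equiv.Perm (Fin n) => F σ ∈ G')).card : ℝ)
      = (k : ℝ) * (n.factorial : ℝ) := by
    have h7 := congrArg (fun t : ℕ => (t : ℝ)) hKey
    push_cast [Nat.cast_sub (by omega : 1 ≤ k + s)] at h7
    convert h7 using 2 <;> push_cast <;> ring
  have hn0 : (n.factorial : ℝ) ≠ 0 := Nat.cast_ne_zero.2 (Nat.factorial_pos n).ne'
  have hks0 : ((k : ℝ) + s) ≠ 0 := by positivity
  have hks1 : ((k : ℝ) + s - 1) ≠ 0 := by
    have h8 : (1 : ℝ) ≤ (k : ℝ) := by exact_mod_cast hk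
    have h9 : (1 : ℝ) ≤ (s : ℝ) := by exact_mod_cast hs
    have h10 : (0 : ℝ) < (k : ℝ) + s - 1 := by linarith
    exact ne_of_gt h10
  rw [div_eq_div_iff hn0 (by exact mul_ne_zero hks0 hks1)]
  linear_combination hcast
end
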